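/- arXiv:1409.5782 — 5 statements merged into one kernel-verified Lean document; each statement's English description precedes it below -/
import Mathlib

section
/- Let K ⊂ ℝⁿ be a convex body and T ⊂ ℝⁿ a convex body containing the origin in its interior. Then ξ_T(K − K) ≤ (n+1)·ξ_T(K), where K − K = {x − y : x, y ∈ K} is the difference body of K. -/
open scoped RealInnerProductSpace Pointwise
open MeasureTheory

/-- A convex body: compact, convex, with nonempty interior. -/
def IsConvexBody {n : ℕ} (K : Set (EuclideanSpace ℝ (Fin n))) : Prop :=
  IsCompact K ∧ Convex ℝ K ∧ (interior K).Nonempty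

/-- The (possibly non-symmetric) norm with unit ball `T°`: `‖v‖_T = max_{p ∈ T} ⟨p, v⟩`. -/
noncomputable def suppNorm {n : ℕ} (T : Set (EuclideanSpace ℝ (Fin n)))
    (v : EuclideanSpace ℝ (Fin n)) : ℝ :=
  sSup ((fun p => ⟪p, v⟫) '' T)

/-- The vertex set `q 0, …, q (m-1)` cannot be translated into the interior of `K`. -/
def NotTranslatableInto {n : ℕ} (m : ℕ) (q : ℕ → EuclideanSpace ℝ (Fin n))
    (K : Set (EuclideanSpace ℝ (Fin n))) : Prop :=
  ∀ t : EuclideanSpace ℝ (Fin n), ∃ i < m, q i + t ∉ interior K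

/-- `ξ_T(K)`: the length of the shortest closed billiard trajectory in `K` with geometry
given by `T`, characterized à la Bezdek–Bezdek as the infimum of `ℓ_T`-lengths of closed
polygonal lines whose vertex set cannot be translated into the interior of `K`. -/
noncomputable def xi {n : ℕ} (T K : Set (EuclideanSpace ℝ (Fin n))) : ℝ :=
  sInf {ℓ : ℝ | ∃ m : ℕ, 2 ≤ m ∧ ∃ q : ℕ → EuclideanSpace ℝ (Fin n),
    NotTranslatableInto m q K ∧
    ℓ = ∑ i ∈ Finset.range m, suppNorm T (q ((i + 1) % m) - q i)}

/-- `ξ_B(K)`: the Euclidean version of `xi`. -/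
noncomputable def xiB {n : ℕ} (K : Set (EuclideanSpace ℝ (Fin n))) : ℝ :=
  sInf {ℓ : ℝ | ∃ m : ℕ, 2 ≤ m ∧ ∃ q : ℕ → EuclideanSpace ℝ (Fin n),
    NotTranslatableInto m q K ∧
    ℓ = ∑ i ∈ Finset.range m, ‖q ((i + 1) % m) - q i‖}

/-- The Euclidean width of `K`: the minimum over unit directions of the breadth. -/
noncomputable def widthB {n : ℕ} (K : Set (EuclideanSpace ℝ (Fin n))) : ℝ :=
  sInf {w : ℝ | ∃ p : EuclideanSpace ℝ (Fin n), ‖p‖ = 1 ∧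
    w = sSup ((fun q => ⟪p, q⟫) '' K) - sInf ((fun q => ⟪p, q⟫) '' K)}

/-- The polar body `K° = {p : ⟨p, q⟩ ≤ 1 ∀ q ∈ K}`. -/
def polarBody {n : ℕ} (K : Set (EuclideanSpace ℝ (Fin n))) :
    Set (EuclideanSpace ℝ (Fin n)) :=
  {p | ∀ q ∈ K, ⟪p, q⟫ ≤ 1}

/-!
By Helly's theorem applied to the sets `{z | (n + 1) • z - x ∈ n • K}`, `x ∈ K`, there is a
point `p` with `(n + 1) • p - K ⊆ n • K`. As `K + n • K = (n + 1) • K` for convex `K`, the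
difference body `K - K` lies in a translate of `(n + 1) • K`. Finally `ξ_T` is antitone under
inclusion, translation invariant and positively homogeneous.
-/

open Set Module

section Convex

variable {𝕜 E : Type*} [Field 𝕜] [LinearOrder 𝕜] [IsStrictOrderedRing 𝕜]
  [AddCommGroup E] [Module 𝕜 E] {K : Set E}

theorem Convex.multiset_sum_mem_card_smul (hK : Convex 𝕜 K) (hne : K.Nonempty) {M : Multiset E}
    (hM : ∀ x ∈ M, x ∈ K) : M.sum ∈ (Multiset.card M : 𝕜) • K := by
  induction M using Multiset.induction_on with
  | empty => simp [zero_smul_set hne]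
  | cons x M ih =>
    rw [Multiset.sum_cons, Multiset.card_cons, Nat.cast_succ, add_comm,
      hK.add_smul zero_le_one M.card.cast_nonneg, one_smul]
    exact add_mem_add (hM x (Multiset.mem_cons_self x M))
      (ih fun y hy => hM y (Multiset.mem_cons_of_mem hy))

variable [TopologicalSpace E] [T2Space E] [ContinuousAdd E] [ContinuousConstSMul 𝕜 E]
  [FiniteDimensional 𝕜 E]

theorem Convex.exists_smul_sub_mem_finrank_smul (hK : Convex 𝕜 K) (hKc : IsCompact K)
    (hne : K.Nonempty) :
    ∃ p : E, ∀ x ∈ K, ((finrank 𝕜 E : 𝕜) + 1) • p - x ∈ (finrank 𝕜 E : 𝕜) • K := by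
  classical
  set d := finrank 𝕜 E
  have hd : (d : 𝕜) + 1 ≠ 0 := d.cast_add_one_ne_zero
  set F : K → Set E := fun x => ((d : 𝕜) + 1)⁻¹ • ((x : E) +ᵥ (d : 𝕜) • K)
  have mem_F : ∀ x z, z ∈ F x ↔ ((d : 𝕜) + 1) • z - x ∈ (d : 𝕜) • K := fun x z => by
    rw [mem_inv_smul_set_iff₀ hd, mem_vadd_set_iff_neg_vadd_mem, vadd_eq_add, neg_add_eq_sub]
  obtain ⟨p, hp⟩ : (⋂ x, F x).Nonempty := by
    refine Convex.helly_theorem_compact' (𝕜 := 𝕜)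
      (fun x => ((hK.smul _).vadd _).smul _) (fun x => ((hKc.smul _).vadd _).smul _)
      fun I hI => ?_
    obtain ⟨x₀, hx₀⟩ := hne
    -- Padding `I` with copies of `x₀` gives `d + 1` points of `K`, so removing any `x ∈ I`
    -- leaves `d` points of `K`, whose sum lies in `d • K`.
    set M : Multiset E := I.val.map (↑) + Multiset.replicate (d + 1 - I.card) x₀
    have hMK : ∀ y ∈ M, y ∈ K := by
      simp only [M, Multiset.mem_add, Multiset.mem_map, Multiset.mem_replicate]
      rintro y (⟨x, -, rfl⟩ | ⟨-, rfl⟩)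
      exacts [x.2, hx₀]
    have hMcard : Multiset.card M = d + 1 := by
      simp only [M, Multiset.card_add, Multiset.card_map, Finset.card_val,
        Multiset.card_replicate]
      omega
    refine ⟨((d : 𝕜) + 1)⁻¹ • M.sum, mem_iInter₂.2 fun x hx => (mem_F _ _).2 ?_⟩
    have hxM : (x : E) ∈ M := Multiset.mem_add.2 (Or.inl (Multiset.mem_map_of_mem _ hx))
    rw [smul_inv_smul₀ hd, ← Multiset.sum_erase hxM, add_sub_cancel_left]
    have := hK.multiset_sum_mem_card_smul ⟨x₀, hx₀⟩ (M := M.erase x) fun y hy =>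
      hMK y (Multiset.mem_of_mem_erase hy)
    rwa [Multiset.card_erase_of_mem hxM, hMcard, Nat.pred_succ] at this
  exact ⟨p, fun x hx => (mem_F ⟨x, hx⟩ p).1 (mem_iInter.1 hp ⟨x, hx⟩)⟩

theorem Convex.exists_sub_subset_vadd_smul (hK : Convex 𝕜 K) (hKc : IsCompact K)
    (hne : K.Nonempty) : ∃ v : E, K - K ⊆ v +ᵥ ((finrank 𝕜 E : 𝕜) + 1) • K := by
  obtain ⟨p, hp⟩ := hK.exists_smul_sub_mem_finrank_smul hKc hne
  refine ⟨-(((finrank 𝕜 E : 𝕜) + 1) • p), ?_⟩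
  rintro _ ⟨a, ha, b, hb, rfl⟩
  rw [mem_vadd_set_iff_neg_vadd_mem, neg_neg, vadd_eq_add,
    hK.add_smul (Nat.cast_nonneg _) zero_le_one, one_smul]
  convert add_mem_add (hp b hb) ha using 1
  rw [sub_add_eq_add_sub, add_sub_assoc]

end Convex

section Billiards

variable {n m : ℕ} {q : ℕ → EuclideanSpace ℝ (Fin n)} {T K A B : Set (EuclideanSpace ℝ (Fin n))}

theorem NotTranslatableInto.mono (h : NotTranslatableInto m q B) (hAB : A ⊆ B) :
    NotTranslatableInto m q A := fun t =>
  (h t).imp fun _ ⟨hi, hq⟩ => ⟨hi, fun hA => hq (interior_mono hAB hA)⟩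

theorem notTranslatableInto_vadd_iff (v : EuclideanSpace ℝ (Fin n)) :
    NotTranslatableInto m q (v +ᵥ K) ↔ NotTranslatableInto m q K := by
  simp only [NotTranslatableInto, interior_vadd, mem_vadd_set_iff_neg_vadd_mem, vadd_eq_add]
  constructor
  · intro h t
    exact (h (v + t)).imp fun _ ⟨hi, hq⟩ =>
      ⟨hi, by rwa [add_left_comm, neg_add_cancel_left] at hq⟩
  · intro h t
    exact (h (-v + t)).imp fun _ ⟨hi, hq⟩ => ⟨hi, by rwa [add_left_comm] at hq⟩

theorem NotTranslatableInto.smul {c : ℝ} (hc : c ≠ 0) (h : NotTranslatableInto m q K) :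
    NotTranslatableInto m (c • q) (c • K) := fun t =>
  (h (c⁻¹ • t)).imp fun _ ⟨hi, hq⟩ => ⟨hi, by
    rwa [interior_smul₀ hc, mem_smul_set_iff_inv_smul_mem₀ hc, Pi.smul_apply, smul_add,
      inv_smul_smul₀ hc]⟩

-- For unbounded `T` the supremum is the junk value `0`, which is still nonnegative.
theorem suppNorm_nonneg (h0 : 0 ∈ T) (v : EuclideanSpace ℝ (Fin n)) : 0 ≤ suppNorm T v := by
  by_cases hb : BddAbove ((fun p => ⟪p, v⟫) '' T)
  · simpa [suppNorm] using le_csSup hb (mem_image_of_mem _ h0)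
  · rw [suppNorm, Real.sSup_of_not_bddAbove hb]

theorem suppNorm_smul (T : Set (EuclideanSpace ℝ (Fin n))) {c : ℝ} (hc : 0 ≤ c)
    (v : EuclideanSpace ℝ (Fin n)) : suppNorm T (c • v) = c * suppNorm T v := by
  have himg : (fun p => ⟪p, c • v⟫) '' T = c • ((fun p => ⟪p, v⟫) '' T) := by
    rw [← image_smul, image_image]
    simp only [real_inner_smul_right, smul_eq_mul]
  rw [suppNorm, suppNorm, himg, Real.sSup_smul_of_nonneg hc, smul_eq_mul]

def nonTranslatableLengths (T K : Set (EuclideanSpace ℝ (Fin n))) : Set ℝ :=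
  {ℓ : ℝ | ∃ m : ℕ, 2 ≤ m ∧ ∃ q : ℕ → EuclideanSpace ℝ (Fin n),
    NotTranslatableInto m q K ∧
    ℓ = ∑ i ∈ Finset.range m, suppNorm T (q ((i + 1) % m) - q i)}

theorem xi_eq_sInf_nonTranslatableLengths :
    xi T K = sInf (nonTranslatableLengths T K) := rfl

theorem nonTranslatableLengths_subset_Ici (h0 : 0 ∈ T) : nonTranslatableLengths T K ⊆ Ici 0 := by
  rintro _ ⟨m, -, q, -, rfl⟩
  exact Finset.sum_nonneg fun i _ => suppNorm_nonneg h0 _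

theorem xi_nonneg (h0 : 0 ∈ T) : 0 ≤ xi T K :=
  Real.sInf_nonneg fun _ hℓ => nonTranslatableLengths_subset_Ici h0 hℓ

theorem nonTranslatableLengths_nonempty [Nontrivial (EuclideanSpace ℝ (Fin n))]
    (hK : Bornology.IsBounded K) : (nonTranslatableLengths T K).Nonempty := by
  obtain ⟨w, hw⟩ : (K - K)ᶜ.Nonempty :=
    nonempty_compl.2 fun h => NormedSpace.unbounded_univ ℝ _ (h ▸ hK.sub hK)
  refine ⟨_, 2, le_rfl, fun i => if i = 0 then 0 else w, fun t => ?_, rfl⟩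
  by_contra! h
  exact hw ⟨w + t, interior_subset (by simpa using h 1 one_lt_two), t,
    interior_subset (by simpa using h 0 two_pos), add_sub_cancel_right w t⟩

theorem nonTranslatableLengths_anti (hAB : A ⊆ B) :
    nonTranslatableLengths T B ⊆ nonTranslatableLengths T A := by
  rintro _ ⟨m, hm, q, hq, rfl⟩
  exact ⟨m, hm, q, hq.mono hAB, rfl⟩

theorem nonTranslatableLengths_vadd (v : EuclideanSpace ℝ (Fin n)) :
    nonTranslatableLengths T (v +ᵥ K) = nonTranslatableLengths T K := by
  simp only [nonTranslatableLengths, notTranslatableInto_vadd_iff]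

theorem smul_nonTranslatableLengths_subset {c : ℝ} (hc : 0 < c) :
    c • nonTranslatableLengths T K ⊆ nonTranslatableLengths T (c • K) := by
  rintro _ ⟨_, ⟨m, hm, q, hq, rfl⟩, rfl⟩
  refine ⟨m, hm, c • q, hq.smul hc.ne', ?_⟩
  simp only [smul_eq_mul, Finset.mul_sum, Pi.smul_apply, ← smul_sub, suppNorm_smul T hc.le]

theorem xi_le_mul_of_subset_vadd_smul [Nontrivial (EuclideanSpace ℝ (Fin n))] (h0 : 0 ∈ T)
    (hK : Bornology.IsBounded K) {c : ℝ} (hc : 0 < c) {v : EuclideanSpace ℝ (Fin n)}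
    (hA : A ⊆ v +ᵥ c • K) : xi T A ≤ c * xi T K := by
  have hsub : c • nonTranslatableLengths T K ⊆ nonTranslatableLengths T A :=
    calc c • nonTranslatableLengths T K ⊆ nonTranslatableLengths T (c • K) :=
          smul_nonTranslatableLengths_subset hc
      _ = nonTranslatableLengths T (v +ᵥ c • K) := (nonTranslatableLengths_vadd v).symm
      _ ⊆ nonTranslatableLengths T A := nonTranslatableLengths_anti hA
  calc xi T A ≤ sInf (c • nonTranslatableLengths T K) :=
        csInf_le_csInf ⟨0, nonTranslatableLengths_subset_Ici h0⟩
          (nonTranslatableLengths_nonempty hK).smul_set hsub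
    _ = c * xi T K := by
      rw [Real.sInf_smul_of_nonneg hc.le, smul_eq_mul, xi_eq_sInf_nonTranslatableLengths]

end Billiards

theorem xi_diff_le_general (n : ℕ) (K T : Set (EuclideanSpace ℝ (Fin n)))
    (hK : IsConvexBody K)
    (hT0 : (0 : EuclideanSpace ℝ (Fin n)) ∈ interior T) :
    xi T (K - K) ≤ ((n : ℝ) + 1) * xi T K := by
  obtain ⟨hKc, hKv, hKi⟩ := hK
  have hKne : K.Nonempty := hKi.mono interior_subset
  have h0 : (0 : EuclideanSpace ℝ (Fin n)) ∈ T := interior_subset hT0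
  rcases subsingleton_or_nontrivial (EuclideanSpace ℝ (Fin n)) with _ | _
  · rw [(hKne.sub hKne).eq_univ, ← hKne.eq_univ]
    exact le_mul_of_one_le_left (xi_nonneg h0) (le_add_of_nonneg_left n.cast_nonneg)
  · obtain ⟨v, hv⟩ := hKv.exists_sub_subset_vadd_smul hKc hKne
    rw [finrank_euclideanSpace_fin] at hv
    exact xi_le_mul_of_subset_vadd_smul h0 hKc.isBounded (by positivity) hv

/-- Rogers–Shepard type inequality for shortest billiard trajectories:
`ξ_T(K − K) ≤ (n+1)·ξ_T(K)`. -/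
theorem xi_diff_le (n : ℕ) (K T : Set (EuclideanSpace ℝ (Fin n)))
    (hK : IsConvexBody K) (hT : IsConvexBody T)
    (hT0 : (0 : EuclideanSpace ℝ (Fin n)) ∈ interior T) :
    xi T (K - K) ≤ ((n : ℝ) + 1) * xi T K :=
  xi_diff_le_general n K T hK hT0
end

section
/- For every convex body K ⊂ ℝ², ξ_B(K) ≥ √3 · w_B(K), where w_B(K) denotes the Euclidean width of K. -/
open scoped RealInnerProductSpace Pointwise
open MeasureTheory

/-!
By Helly's theorem in the plane, a closed polygon whose vertex set cannot be translated into
`interior K` has three vertices `a, b, c`, in cyclic order, with the same property, and its length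
is at least the perimeter of the triangle `abc`. Separating `(interior K)³` from the translates of
`(a, b, c)` in `E³` gives `u₁ + u₂ + u₃ = 0`, not all zero, with
`⟪u₁, x⟫ + ⟪u₂, y⟫ + ⟪u₃, z⟫ ≤ ⟪u₁, a⟫ + ⟪u₂, b⟫ + ⟪u₃, c⟫ =: V` on `K³`; testing it at points of
`K` extremal in the direction `uᵢ` gives `M · w_B(K) ≤ V` with `M = maxᵢ ‖uᵢ‖`. Writing
`u₁ = q - r`, `u₂ = r - p`, `u₃ = p - q`, the triangle `pqr` has diameter at most `M`, so by Jung's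
theorem some `o` lies within `M / √3` of its vertices, and
`V = ⟪o - r, a - b⟫ + ⟪q - o, a - c⟫ + ⟪o - p, b - c⟫ ≤ M · perimeter / √3`.
-/

section Jung

variable {E : Type*} [NormedAddCommGroup E] [InnerProductSpace ℝ E]

private theorem jung_cubic_le_of_fst_max {x y z : ℝ} (hy : 0 ≤ y) (hz : 0 ≤ z) (hyx : y ≤ x)
    (hzx : z ≤ x) :
    (y + z) ^ 2 * y + (z + x) ^ 2 * x + (y + z) * (z + x) * (x + y - z)
      ≤ 4 / 3 * x * (x + y + z) ^ 2 := by
  have hx : 0 ≤ x := hy.trans hyx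
  nlinarith [mul_nonneg hz (sq_nonneg (y - z)),
    mul_nonneg (mul_nonneg hy (sub_nonneg.2 hzx)) (sub_nonneg.2 hzx),
    mul_nonneg (mul_nonneg hx hy) (sub_nonneg.2 hyx),
    mul_nonneg (mul_nonneg hz hz) (sub_nonneg.2 hyx),
    mul_nonneg (mul_nonneg hy hz) (sub_nonneg.2 hyx),
    mul_nonneg (mul_nonneg hy hy) (sub_nonneg.2 hyx), mul_nonneg hx (sq_nonneg (x - z)),
    mul_nonneg hz (sq_nonneg (x - z))]

private theorem jung_cubic_le_of_thd_max {x y z : ℝ} (hx : 0 ≤ x) (hy : 0 ≤ y) (hxz : x ≤ z)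
    (hyz : y ≤ z) :
    (y + z) ^ 2 * y + (z + x) ^ 2 * x + (y + z) * (z + x) * (x + y - z)
      ≤ 4 / 3 * z * (x + y + z) ^ 2 := by
  have hz : 0 ≤ z := hy.trans hyz
  nlinarith [mul_nonneg (mul_nonneg hz (sub_nonneg.2 hyz)) (sub_nonneg.2 hxz),
    mul_nonneg (mul_nonneg hy hx) (sub_nonneg.2 hxz),
    mul_nonneg (mul_nonneg hy hy) (sub_nonneg.2 hxz),
    mul_nonneg (mul_nonneg hz hz) (sub_nonneg.2 hyz),
    mul_nonneg (mul_nonneg hz hx) (sub_nonneg.2 hxz),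
    mul_nonneg (mul_nonneg hz hy) (sub_nonneg.2 hyz),
    mul_nonneg (mul_nonneg hx hx) (sub_nonneg.2 hxz),
    mul_nonneg (mul_nonneg hy hy) (sub_nonneg.2 hyz),
    mul_nonneg (mul_nonneg hz hz) (sub_nonneg.2 hxz)]

theorem jung_cubic_le {x y z m : ℝ} (hx : 0 ≤ x) (hy : 0 ≤ y) (hz : 0 ≤ z) (hxm : x ≤ m)
    (hym : y ≤ m) (hzm : z ≤ m) :
    (y + z) ^ 2 * y + (z + x) ^ 2 * x + (y + z) * (z + x) * (x + y - z)
      ≤ 4 / 3 * m * (x + y + z) ^ 2 := by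
  have hmono : ∀ w, w ≤ m → 4 / 3 * w * (x + y + z) ^ 2 ≤ 4 / 3 * m * (x + y + z) ^ 2 :=
    fun w hw => by gcongr
  rcases le_total y x with hyx | hxy
  · rcases le_total z x with hzx | hxz
    · exact (jung_cubic_le_of_fst_max hy hz hyx hzx).trans (hmono x hxm)
    · exact (jung_cubic_le_of_thd_max hx hy hxz (hyx.trans hxz)).trans (hmono z hzm)
  · rcases le_total z y with hzy | hyz
    · have h := jung_cubic_le_of_fst_max hx hz hxy hzy
      have hm := hmono y hym
      ring_nf at h hm ⊢
      linarith
    · exact (jung_cubic_le_of_thd_max hx hy (hxy.trans hyz) hyz).trans (hmono z hzm)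

/-- Barycentric weights `(b² + c², c² + a², a² + b²)`, with `a, b, c` the side lengths opposite
`p, q, r`: a point within `diam / √3` of all three vertices, also for obtuse triangles, where the
circumcentre is not. -/
noncomputable def jungCenter (p q r : E) : E :=
  (2 * (dist q r ^ 2 + dist r p ^ 2 + dist p q ^ 2))⁻¹ •
    ((dist r p ^ 2 + dist p q ^ 2) • p + (dist p q ^ 2 + dist q r ^ 2) • q +
      (dist q r ^ 2 + dist r p ^ 2) • r)

theorem jungCenter_rotate (p q r : E) : jungCenter p q r = jungCenter q r p := by
  rw [jungCenter, jungCenter, add_rotate (dist q r ^ 2)]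
  congr 1
  abel

theorem sqrt_three_mul_dist_jungCenter_le {p q r : E} {d : ℝ} (hpq : dist p q ≤ d)
    (hqr : dist q r ≤ d) (hrp : dist r p ≤ d)
    (hS : dist q r ^ 2 + dist r p ^ 2 + dist p q ^ 2 ≠ 0) :
    √3 * dist (jungCenter p q r) r ≤ d := by
  have h2S : 2 * (dist q r ^ 2 + dist r p ^ 2 + dist p q ^ 2) ≠ 0 := mul_ne_zero two_ne_zero hS
  have hcenter : jungCenter p q r - r = (2 * (dist q r ^ 2 + dist r p ^ 2 + dist p q ^ 2))⁻¹ •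
      ((dist r p ^ 2 + dist p q ^ 2) • (p - r) + (dist p q ^ 2 + dist q r ^ 2) • (q - r)) := by
    rw [eq_inv_smul_iff₀ h2S, smul_sub, jungCenter, smul_inv_smul₀ h2S]
    module
  have hcos : 2 * ⟪p - r, q - r⟫ = dist r p ^ 2 + dist q r ^ 2 - dist p q ^ 2 := by
    rw [dist_comm r p, dist_eq_norm, dist_eq_norm, dist_eq_norm,
      show p - q = (p - r) - (q - r) by abel, norm_sub_sq_real (p - r)]
    ring
  have hcubic := jung_cubic_le (sq_nonneg (dist q r)) (sq_nonneg (dist r p))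
    (sq_nonneg (dist p q)) (pow_le_pow_left₀ dist_nonneg hqr 2)
    (pow_le_pow_left₀ dist_nonneg hrp 2) (pow_le_pow_left₀ dist_nonneg hpq 2)
  set x := dist q r ^ 2 with hx
  set y := dist r p ^ 2 with hy
  set z := dist p q ^ 2
  have hsq : ‖(y + z) • (p - r) + (z + x) • (q - r)‖ ^ 2
      = (y + z) ^ 2 * y + (z + x) ^ 2 * x + (y + z) * (z + x) * (x + y - z) := by
    rw [norm_add_sq_real, norm_smul, norm_smul, real_inner_smul_left, real_inner_smul_right,
      Real.norm_of_nonneg (by positivity), Real.norm_of_nonneg (by positivity), mul_pow, mul_pow,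
      ← dist_eq_norm, ← dist_eq_norm, dist_comm p r, ← hx, ← hy]
    linear_combination (y + z) * (z + x) * hcos
  have hd : 0 ≤ d := dist_nonneg.trans hpq
  rw [← pow_le_pow_iff_left₀ (by positivity) hd two_ne_zero, mul_pow, Real.sq_sqrt zero_le_three,
    dist_eq_norm, hcenter, norm_smul, mul_pow, norm_inv, Real.norm_of_nonneg (by positivity), hsq]
  calc 3 * ((2 * (x + y + z))⁻¹ ^ 2 * _)
      ≤ 3 * ((2 * (x + y + z))⁻¹ ^ 2 * (4 / 3 * d ^ 2 * (x + y + z) ^ 2)) := by gcongr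
    _ = d ^ 2 := by field_simp; ring

theorem exists_sqrt_three_mul_dist_le {p q r : E} {d : ℝ} (hpq : dist p q ≤ d)
    (hqr : dist q r ≤ d) (hrp : dist r p ≤ d) :
    ∃ o, √3 * dist o p ≤ d ∧ √3 * dist o q ≤ d ∧ √3 * dist o r ≤ d := by
  by_cases hS : dist q r ^ 2 + dist r p ^ 2 + dist p q ^ 2 = 0
  · have hd : 0 ≤ d := dist_nonneg.trans hpq
    have hpq₀ : dist p q = 0 := (pow_eq_zero_iff two_ne_zero).1 <| by
      linarith [sq_nonneg (dist q r), sq_nonneg (dist r p), sq_nonneg (dist p q)]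
    have hrp₀ : dist r p = 0 := (pow_eq_zero_iff two_ne_zero).1 <| by
      linarith [sq_nonneg (dist q r), sq_nonneg (dist r p), sq_nonneg (dist p q)]
    exact ⟨p, by simp [hd, hpq₀, hrp₀, dist_comm p r]⟩
  · refine ⟨jungCenter p q r, ?_, ?_, sqrt_three_mul_dist_jungCenter_le hpq hqr hrp hS⟩
    · rw [jungCenter_rotate]
      exact sqrt_three_mul_dist_jungCenter_le hqr hrp hpq (by rwa [add_rotate] at hS)
    · rw [jungCenter_rotate, jungCenter_rotate]
      exact sqrt_three_mul_dist_jungCenter_le hrp hpq hqr (by rwa [← add_rotate] at hS)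

theorem sqrt_three_mul_inner_add_inner_add_inner_le {u₁ u₂ u₃ : E} {M : ℝ}
    (hsum : u₁ + u₂ + u₃ = 0) (h₁ : ‖u₁‖ ≤ M) (h₂ : ‖u₂‖ ≤ M) (h₃ : ‖u₃‖ ≤ M) (a b c : E) :
    √3 * (⟪u₁, a⟫ + ⟪u₂, b⟫ + ⟪u₃, c⟫) ≤ M * (dist a b + dist b c + dist c a) := by
  obtain rfl : -(u₁ + u₂) = u₃ := neg_eq_of_add_eq_zero_right hsum
  obtain ⟨o, hp, hq, hr⟩ := exists_sqrt_three_mul_dist_le (p := -u₂) (q := u₁) (r := 0) (d := M)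
    (by rwa [dist_eq_norm, ← norm_neg, neg_sub, sub_neg_eq_add, ← norm_neg])
    (by rwa [dist_zero_right]) (by rwa [dist_zero_left, norm_neg])
  have hflow : ⟪u₁, a⟫ + ⟪u₂, b⟫ + ⟪-(u₁ + u₂), c⟫
      = ⟪o - 0, a - b⟫ + ⟪u₁ - o, a - c⟫ + ⟪o - -u₂, b - c⟫ := by
    simp only [inner_sub_left, inner_sub_right, inner_add_left, inner_neg_left, inner_zero_left]
    ring
  have hedge : ∀ x y w : E, √3 * dist x y ≤ M → √3 * ⟪x - y, w⟫ ≤ M * ‖w‖ := fun x y w h =>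
    calc √3 * ⟪x - y, w⟫ ≤ √3 * (‖x - y‖ * ‖w‖) := by gcongr; exact real_inner_le_norm _ _
      _ = √3 * dist x y * ‖w‖ := by rw [dist_eq_norm, mul_assoc]
      _ ≤ M * ‖w‖ := by gcongr
  rw [hflow, dist_comm c a, dist_eq_norm, dist_eq_norm, dist_eq_norm]
  linarith [hedge o 0 (a - b) hr, hedge u₁ o (a - c) (dist_comm o u₁ ▸ hq),
    hedge o (-u₂) (b - c) hp]

end Jung

section Separation

variable {E : Type*} [NormedAddCommGroup E] [NormedSpace ℝ E]

theorem exists_strongDual_separating_translates {K : Set E} (hK : Convex ℝ K)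
    (hKi : (interior K).Nonempty) {a b c : E}
    (h : ∀ t, ¬(a + t ∈ interior K ∧ b + t ∈ interior K ∧ c + t ∈ interior K)) :
    ∃ f : StrongDual ℝ (E × E × E), f ≠ 0 ∧ (∀ t, f (t, t, t) = 0) ∧
      ∀ x ∈ K, ∀ y ∈ K, ∀ z ∈ K, f (x, y, z) ≤ f (a, b, c) := by
  set C := interior K ×ˢ interior K ×ˢ interior K
  have hD : Convex ℝ (Set.range fun t : E => (a + t, b + t, c + t)) := by
    rintro _ ⟨t, rfl⟩ _ ⟨t', rfl⟩ μ ν - - hμν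
    refine ⟨μ • t + ν • t', ?_⟩
    simp only [Prod.smul_mk, Prod.mk_add_mk, Prod.mk.injEq]
    refine ⟨?_, ?_, ?_⟩
    · linear_combination (norm := module) -hμν • a
    · linear_combination (norm := module) -hμν • b
    · linear_combination (norm := module) -hμν • c
  have hCD : Disjoint C (Set.range fun t : E => (a + t, b + t, c + t)) := by
    rw [Set.disjoint_left]
    rintro _ hp ⟨t, rfl⟩
    exact h t hp
  obtain ⟨f, s, hfC, hfD⟩ := geometric_hahn_banach_open
    (hK.interior.prod (hK.interior.prod hK.interior))
    (isOpen_interior.prod (isOpen_interior.prod isOpen_interior)) hD hCD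
  have hfD' : ∀ t, s ≤ f (a, b, c) + f (t, t, t) := fun t => by
    simpa [← map_add] using hfD _ ⟨t, rfl⟩
  -- an affine function bounded below on a line is constant along it
  have hdiag : ∀ t, f (t, t, t) = 0 := by
    intro t
    by_contra ht
    have := hfD' (((s - f (a, b, c) - 1) / f (t, t, t)) • t)
    rw [← Prod.smul_mk, ← Prod.smul_mk, map_smul, smul_eq_mul, div_mul_cancel₀ _ ht] at this
    linarith
  have hlt : ∀ p ∈ C, f p < f (a, b, c) := fun p hp => by
    linarith [hfC p hp, hfD' 0, hdiag 0]
  refine ⟨f, ?_, hdiag, fun x hx y hy z hz => ?_⟩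
  · rintro rfl
    obtain ⟨x, hx⟩ := hKi
    simpa using hlt (x, x, x) ⟨hx, hx, hx⟩
  · have hKC : K ×ˢ K ×ˢ K ⊆ closure C := by
      simp only [C, closure_prod_eq, hK.closure_interior_eq_closure_of_nonempty_interior hKi]
      exact Set.prod_mono subset_closure (Set.prod_mono subset_closure subset_closure)
    exact closure_minimal (fun p hp => (hlt p hp).le) (isClosed_le f.continuous continuous_const)
      (hKC ⟨hx, hy, hz⟩)

end Separation

open ContinuousLinearMap InnerProductSpace in
theorem exists_inner_eq_strongDual_prod {E : Type*} [NormedAddCommGroup E]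
    [InnerProductSpace ℝ E] [CompleteSpace E] (f : StrongDual ℝ (E × E × E)) :
    ∃ u₁ u₂ u₃ : E, ∀ x y z, f (x, y, z) = ⟪u₁, x⟫ + ⟪u₂, y⟫ + ⟪u₃, z⟫ := by
  refine ⟨(toDual ℝ E).symm (f.comp (inl ℝ E (E × E))),
    (toDual ℝ E).symm (f.comp ((inr ℝ E (E × E)).comp (inl ℝ E E))),
    (toDual ℝ E).symm (f.comp ((inr ℝ E (E × E)).comp (inr ℝ E E))), fun x y z => ?_⟩
  simp only [toDual_symm_apply, comp_apply, inl_apply, inr_apply, ← map_add, Prod.mk_add_mk,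
    add_zero, zero_add]

section Width

variable {n : ℕ} {K : Set (EuclideanSpace ℝ (Fin n))}

theorem breadth_nonneg (hK : IsCompact K) (p : EuclideanSpace ℝ (Fin n)) :
    0 ≤ sSup ((fun q => ⟪p, q⟫) '' K) - sInf ((fun q => ⟪p, q⟫) '' K) := by
  rcases K.eq_empty_or_nonempty with rfl | hne
  · simp
  have hcpt : IsCompact ((fun q => ⟪p, q⟫) '' K) := hK.image (by fun_prop)
  exact sub_nonneg.2 (csInf_le_csSup (hne.image _) hcpt.bddBelow hcpt.bddAbove)

theorem widthB_nonneg (hK : IsCompact K) : 0 ≤ widthB K :=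
  Real.sInf_nonneg (by rintro _ ⟨p, -, rfl⟩; exact breadth_nonneg hK p)

theorem exists_mul_widthB_le_inner_sub_inner (hK : IsCompact K) (hne : K.Nonempty)
    (u : EuclideanSpace ℝ (Fin n)) :
    ∃ x ∈ K, ∃ y ∈ K, ‖u‖ * widthB K ≤ ⟪u, x⟫ - ⟪u, y⟫ := by
  rcases eq_or_ne u 0 with rfl | hu
  · obtain ⟨x, hx⟩ := hne
    exact ⟨x, hx, x, hx, by simp⟩
  set p := ‖u‖⁻¹ • u
  have hp : ‖p‖ = 1 := norm_smul_inv_norm hu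
  have hcont : Continuous fun q => ⟪p, q⟫ := continuous_const.inner continuous_id
  obtain ⟨x, hx, hmax⟩ := hK.exists_isMaxOn hne hcont.continuousOn
  obtain ⟨y, hy, hmin⟩ := hK.exists_isMinOn hne hcont.continuousOn
  have hsup : sSup ((fun q => ⟪p, q⟫) '' K) = ⟪p, x⟫ :=
    IsGreatest.csSup_eq ⟨⟨x, hx, rfl⟩, by rintro _ ⟨z, hz, rfl⟩; exact hmax hz⟩
  have hinf : sInf ((fun q => ⟪p, q⟫) '' K) = ⟪p, y⟫ :=
    IsLeast.csInf_eq ⟨⟨y, hy, rfl⟩, by rintro _ ⟨z, hz, rfl⟩; exact hmin hz⟩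
  have hwidth : widthB K ≤ ⟪p, x⟫ - ⟪p, y⟫ := by
    rw [← hsup, ← hinf]
    exact csInf_le ⟨0, by rintro _ ⟨p, -, rfl⟩; exact breadth_nonneg hK p⟩ ⟨p, hp, rfl⟩
  refine ⟨x, hx, y, hy, ?_⟩
  calc ‖u‖ * widthB K ≤ ‖u‖ * (⟪p, x⟫ - ⟪p, y⟫) := by gcongr
    _ = ⟪u, x⟫ - ⟪u, y⟫ := by
      simp only [p, real_inner_smul_left]
      field_simp [norm_ne_zero_iff.2 hu]

theorem sqrt_three_mul_widthB_le_perimeter (hK : IsConvexBody K)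
    {a b c : EuclideanSpace ℝ (Fin n)}
    (h : ∀ t, ¬(a + t ∈ interior K ∧ b + t ∈ interior K ∧ c + t ∈ interior K)) :
    √3 * widthB K ≤ dist a b + dist b c + dist c a := by
  obtain ⟨hKc, hKconv, hKi⟩ := hK
  have hne : K.Nonempty := hKi.mono interior_subset
  obtain ⟨f, hf₀, hdiag, hsep⟩ := exists_strongDual_separating_translates hKconv hKi h
  obtain ⟨u₁, u₂, u₃, hf⟩ := exists_inner_eq_strongDual_prod f
  have hsum : u₁ + u₂ + u₃ = 0 := ext_inner_right ℝ fun t => by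
    simpa [inner_add_left, ← hf] using hdiag t
  set M := max ‖u₁‖ (max ‖u₂‖ ‖u₃‖)
  have hM : 0 < M := by
    by_contra! hM
    refine hf₀ (ContinuousLinearMap.ext fun ⟨x, y, z⟩ => ?_)
    simp [hf, norm_le_zero_iff.1 ((le_max_left _ _).trans hM),
      norm_le_zero_iff.1 ((le_max_left _ _).trans ((le_max_right _ _).trans hM)),
      norm_le_zero_iff.1 ((le_max_right _ _).trans ((le_max_right _ _).trans hM))]
  have hMw : M * widthB K ≤ f (a, b, c) := by
    have hw := widthB_nonneg hKc
    obtain ⟨x₁, hx₁, y₁, hy₁, h₁⟩ := exists_mul_widthB_le_inner_sub_inner hKc hne u₁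
    obtain ⟨x₂, hx₂, y₂, hy₂, h₂⟩ := exists_mul_widthB_le_inner_sub_inner hKc hne u₂
    obtain ⟨x₃, hx₃, y₃, hy₃, h₃⟩ := exists_mul_widthB_le_inner_sub_inner hKc hne u₃
    rw [max_mul_of_nonneg _ _ hw, max_mul_of_nonneg _ _ hw]
    refine max_le ?_ (max_le ?_ ?_)
    · linarith [hsep x₁ hx₁ y₁ hy₁ y₁ hy₁, hf x₁ y₁ y₁, hf y₁ y₁ y₁, hdiag y₁]
    · linarith [hsep y₂ hy₂ x₂ hx₂ y₂ hy₂, hf y₂ x₂ y₂, hf y₂ y₂ y₂, hdiag y₂]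
    · linarith [hsep y₃ hy₃ y₃ hy₃ x₃ hx₃, hf y₃ y₃ x₃, hf y₃ y₃ y₃, hdiag y₃]
  have hflow := sqrt_three_mul_inner_add_inner_add_inner_le hsum (le_max_left _ _)
    ((le_max_left _ _).trans (le_max_right _ _)) ((le_max_right _ _).trans (le_max_right _ _)) a b c
  rw [← hf] at hflow
  refine le_of_mul_le_mul_left ?_ hM
  nlinarith [Real.sqrt_nonneg 3]

end Width

theorem Finset.exists_le_le_eq_of_card_le_three {α : Type*} [LinearOrder α] {I : Finset α}
    (hne : I.Nonempty) (hcard : I.card ≤ 3) : ∃ i j k, i ≤ j ∧ j ≤ k ∧ I = {i, j, k} := by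
  have hsorted := I.pairwise_sort (· ≤ ·)
  have hlen : (I.sort (· ≤ ·)).length ≤ 3 := (I.length_sort (· ≤ ·)).trans_le hcard
  have hpos : 0 < (I.sort (· ≤ ·)).length := (I.length_sort (· ≤ ·)).symm ▸ hne.card_pos
  rw [← I.sort_toFinset (· ≤ ·)]
  generalize I.sort (· ≤ ·) = l at hsorted hlen hpos
  match l, hsorted, hlen, hpos with
  | [i], _, _, _ => exact ⟨i, i, i, le_rfl, le_rfl, by simp⟩
  | [i, j], hs, _, _ => exact ⟨i, j, j, by simpa using hs, le_rfl, by simp⟩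
  | [i, j, k], hs, _, _ =>
    simp only [List.pairwise_cons, List.mem_cons, List.not_mem_nil] at hs
    exact ⟨i, j, k, hs.1 j (by simp), hs.2.1 k (by simp), by simp⟩
  | _ :: _ :: _ :: _ :: _, _, hlen, _ => simp only [List.length_cons] at hlen; omega

theorem perimeter_le_sum_range_dist {α : Type*} [PseudoMetricSpace α] (r : ℕ → α)
    {i j k m : ℕ} (hij : i ≤ j) (hjk : j ≤ k) (hkm : k ≤ m) (hr : r m = r 0) :
    dist (r i) (r j) + dist (r j) (r k) + dist (r k) (r i)
      ≤ ∑ t ∈ Finset.range m, dist (r t) (r (t + 1)) := by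
  rw [Finset.range_eq_Ico,
    ← Finset.sum_Ico_consecutive _ (Nat.zero_le i) (hij.trans (hjk.trans hkm)),
    ← Finset.sum_Ico_consecutive _ hij (hjk.trans hkm), ← Finset.sum_Ico_consecutive _ hjk hkm]
  have hclose : dist (r k) (r i) ≤ dist (r k) (r m) + dist (r 0) (r i) :=
    hr ▸ dist_triangle _ _ _
  linarith [dist_le_Ico_sum_dist r (Nat.zero_le i), dist_le_Ico_sum_dist r hij,
    dist_le_Ico_sum_dist r hjk, dist_le_Ico_sum_dist r hkm]

theorem perimeter_le_polygon_length {E : Type*} [SeminormedAddCommGroup E] (q : ℕ → E)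
    {i j k m : ℕ} (hij : i ≤ j) (hjk : j ≤ k) (hkm : k < m) :
    dist (q i) (q j) + dist (q j) (q k) + dist (q k) (q i)
      ≤ ∑ t ∈ Finset.range m, ‖q ((t + 1) % m) - q t‖ := by
  have hmod : ∀ t < m, q (t % m) = q t := fun t ht => by rw [Nat.mod_eq_of_lt ht]
  have h := perimeter_le_sum_range_dist (fun t => q (t % m)) hij hjk hkm.le (by simp)
  rw [hmod i (by omega), hmod j (by omega), hmod k hkm] at h
  refine h.trans_eq (Finset.sum_congr rfl fun t ht => ?_)
  rw [hmod t (Finset.mem_range.1 ht), dist_comm, dist_eq_norm]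

theorem NotTranslatableInto.exists_triple {K : Set (EuclideanSpace ℝ (Fin 2))} (hK : Convex ℝ K)
    {m : ℕ} {q : ℕ → EuclideanSpace ℝ (Fin 2)} (hq : NotTranslatableInto m q K) :
    ∃ i j k, i ≤ j ∧ j ≤ k ∧ k < m ∧
      ∀ t, ¬(q i + t ∈ interior K ∧ q j + t ∈ interior K ∧ q k + t ∈ interior K) := by
  set F : ℕ → Set (EuclideanSpace ℝ (Fin 2)) := fun i => (q i + ·) ⁻¹' interior K
  have hempty : ¬(⋂ i ∈ Finset.range m, F i).Nonempty := fun ⟨t, ht⟩ =>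
    let ⟨i, him, hit⟩ := hq t
    hit (Set.mem_iInter₂.1 ht i (Finset.mem_range.2 him))
  obtain ⟨I, hIm, hIcard, hI⟩ :
      ∃ I ⊆ Finset.range m, I.card ≤ 3 ∧ ¬(⋂ i ∈ I, F i).Nonempty := by
    by_contra! hall
    refine hempty (Convex.helly_theorem' (fun i _ => hK.interior.translate_preimage_right _) ?_)
    simpa [finrank_euclideanSpace_fin] using hall
  have hIne : I.Nonempty := Finset.nonempty_iff_ne_empty.2 (by rintro rfl; simp at hI)
  obtain ⟨i, j, k, hij, hjk, rfl⟩ := Finset.exists_le_le_eq_of_card_le_three hIne hIcard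
  refine ⟨i, j, k, hij, hjk, Finset.mem_range.1 (hIm (by simp)), fun t ht => hI ⟨t, ?_⟩⟩
  simpa [F] using ht

theorem exists_notTranslatableInto_two {n : ℕ} [NeZero n] {K : Set (EuclideanSpace ℝ (Fin n))}
    (hK : Bornology.IsBounded K) : ∃ q, NotTranslatableInto 2 q K := by
  obtain ⟨v, hv⟩ := exists_norm_eq (EuclideanSpace ℝ (Fin n)) (c := Metric.diam K + 1)
    (by positivity)
  refine ⟨fun i => i • v, fun t => ?_⟩
  by_contra! h
  have h₀ := interior_subset (h 0 two_pos)
  have h₁ := interior_subset (h 1 one_lt_two)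
  simp only [zero_smul, zero_add, one_smul] at h₀ h₁
  have := Metric.dist_le_diam_of_mem hK h₁ h₀
  rw [dist_eq_norm, add_sub_cancel_right, hv] at this
  linarith

/-- For every planar convex body, `ξ_B(K) ≥ √3 · w_B(K)`. -/
theorem xiB_ge_sqrt3_width (K : Set (EuclideanSpace ℝ (Fin 2))) (hK : IsConvexBody K) :
    Real.sqrt 3 * widthB K ≤ xiB K := by
  obtain ⟨q₀, hq₀⟩ := exists_notTranslatableInto_two hK.1.isBounded
  refine le_csInf ⟨_, 2, le_rfl, q₀, hq₀, rfl⟩ ?_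
  rintro _ ⟨m, -, q, hq, rfl⟩
  obtain ⟨i, j, k, hij, hjk, hkm, hijk⟩ := hq.exists_triple hK.2.1
  exact (sqrt_three_mul_widthB_le_perimeter hK hijk).trans
    (perimeter_le_polygon_length q hij hjk hkm)
end

section
/- If Δ ⊂ ℝ² is an equilateral triangle, then ξ_B(Δ) = √3 · w_B(Δ); equivalently, the perimeter of the medial (midpoint) triangle of Δ equals √3 times the altitude of Δ. Hence the inequality ξ_B(K) ≥ √3·w_B(K) for planar convex bodies is sharp. -/
/-!
Write the triangle as `conv {G + a₀, G + a₁, G + a₂}` with `a₀ + a₁ + a₂ = 0` and `‖aₖ‖ = r`. In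
the plane the `aₖ` form a tight frame, `∑ ⟪aₖ, x⟫ aₖ = (3r²/2) x`; this yields the half-plane
description `-r²/2 ≤ ⟪aₖ, x - G⟫` of the triangle and shows that its width is the altitude `3r/2`.

For `ξ_B`, pick for each `k` a vertex `q_{j k}` of the polygon minimising `⟪aₖ, ·⟫`. If these three
extremal values left positive total slack, some translation (which can prescribe any sum-zero
triple `⟪aₖ, t⟫`) would move the polygon into the interior. So the slack vanishes, and the identity
`3 ∑ ⟪uₖ, xₖ⟫ = ∑ ⟪uₖ - uₖ₊₁, xₖ - xₖ₊₁⟫` for `∑ uₖ = 0`, with `uₖ = -aₖ`, bounds the perimeter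
of the triangle `q_{j 0} q_{j 1} q_{j 2}`, hence of the polygon, below by `3√3 r / 2`. The medial
triangle attains this bound and cannot be translated into the interior, as its vertices lie on the
sides.
-/

open scoped RealInnerProductSpace Pointwise
open MeasureTheory

open Finset

section ClosedPolygon

variable {α : Type*} [PseudoMetricSpace α]

theorem dist_add_dist_add_dist_le_sum_range_dist_of_le (q : ℕ → α) {m j₁ j₂ j₃ : ℕ}
    (h₁₂ : j₁ ≤ j₂) (h₂₃ : j₂ ≤ j₃) (h₃ : j₃ < m) :
    dist (q j₁) (q j₂) + dist (q j₂) (q j₃) + dist (q j₃) (q j₁) ≤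
      ∑ i ∈ range m, dist (q i) (q ((i + 1) % m)) := by
  set f : ℕ → α := fun i => q (i % m)
  have hf : ∀ i < m, f i = q i := fun i hi => congrArg q (Nat.mod_eq_of_lt hi)
  have hsum : ∑ i ∈ range m, dist (q i) (q ((i + 1) % m)) =
      ∑ i ∈ Ico 0 m, dist (f i) (f (i + 1)) := by
    rw [range_eq_Ico]
    exact sum_congr rfl fun i hi => by rw [hf i (mem_Ico.1 hi).2]
  have hfm : f m = f 0 := by simp [f]
  have h₂m := h₂₃.trans h₃.le
  rw [hsum, ← sum_Ico_consecutive _ (Nat.zero_le j₁) (h₁₂.trans h₂m),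
    ← sum_Ico_consecutive _ h₁₂ h₂m, ← sum_Ico_consecutive _ h₂₃ h₃.le]
  have d₀₁ := dist_le_Ico_sum_dist f (Nat.zero_le j₁)
  have d₁₂ := dist_le_Ico_sum_dist f h₁₂
  have d₂₃ := dist_le_Ico_sum_dist f h₂₃
  have d₃m := dist_le_Ico_sum_dist f h₃.le
  rw [hfm, hf 0 (by omega)] at d₃m
  rw [hf 0 (by omega), hf j₁ (by omega)] at d₀₁
  rw [hf j₁ (by omega), hf j₂ (by omega)] at d₁₂
  rw [hf j₂ (by omega)] at d₂₃
  rw [hf j₃ h₃] at d₂₃ d₃m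
  linarith [dist_triangle (q j₃) (q 0) (q j₁)]

theorem sum_dist_le_sum_range_dist (q : ℕ → α) {m : ℕ} (j : Fin 3 → ℕ) (hj : ∀ k, j k < m) :
    ∑ k, dist (q (j k)) (q (j (k + 1))) ≤ ∑ i ∈ range m, dist (q i) (q ((i + 1) % m)) := by
  have sorted := fun {a b c : ℕ} =>
    dist_add_dist_add_dist_le_sum_range_dist_of_le q (j₁ := a) (j₂ := b) (j₃ := c) (m := m)
  simp only [Fin.sum_univ_three, Fin.reduceAdd]
  have := dist_comm (q (j 0)) (q (j 1))
  have := dist_comm (q (j 1)) (q (j 2))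
  have := dist_comm (q (j 2)) (q (j 0))
  rcases le_total (j 0) (j 1) with _ | _ <;> rcases le_total (j 1) (j 2) with _ | _ <;>
    rcases le_total (j 0) (j 2) with _ | _ <;>
    first
    | linarith [sorted ‹j 0 ≤ j 1› ‹j 1 ≤ j 2› (hj 2)]
    | linarith [sorted ‹j 0 ≤ j 2› ‹j 2 ≤ j 1› (hj 1)]
    | linarith [sorted ‹j 1 ≤ j 0› ‹j 0 ≤ j 2› (hj 2)]
    | linarith [sorted ‹j 1 ≤ j 2› ‹j 2 ≤ j 0› (hj 0)]
    | linarith [sorted ‹j 2 ≤ j 0› ‹j 0 ≤ j 1› (hj 1)]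
    | linarith [sorted ‹j 2 ≤ j 1› ‹j 1 ≤ j 0› (hj 0)]

end ClosedPolygon

theorem sq_sub_ge_of_add_add_eq_zero {c₀ c₁ c₂ : ℝ} (h : c₀ + c₁ + c₂ = 0) :
    3 / 2 * (c₀ ^ 2 + c₁ ^ 2 + c₂ ^ 2) ≤ (c₀ - c₁) ^ 2 ∨
      3 / 2 * (c₀ ^ 2 + c₁ ^ 2 + c₂ ^ 2) ≤ (c₁ - c₂) ^ 2 ∨
      3 / 2 * (c₀ ^ 2 + c₁ ^ 2 + c₂ ^ 2) ≤ (c₂ - c₀) ^ 2 := by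
  have hc₂ : c₂ = -c₀ - c₁ := by linarith
  subst hc₂
  -- Of three differences summing to zero, two have the same sign, and then the third dominates.
  by_cases h₁ : 0 ≤ (c₀ - c₁) * (c₁ - (-c₀ - c₁))
  · right; right; nlinarith
  by_cases h₂ : 0 ≤ (c₁ - (-c₀ - c₁)) * ((-c₀ - c₁) - c₀)
  · left; nlinarith
  · right; left
    nlinarith [mul_pos (neg_pos.2 (not_le.1 h₁)) (neg_pos.2 (not_le.1 h₂)),
      sq_nonneg (c₁ - (-c₀ - c₁))]

variable {E : Type*} [NormedAddCommGroup E] [InnerProductSpace ℝ E]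

theorem three_mul_sum_inner_le {u x : Fin 3 → E} (hu : ∑ k, u k = 0) :
    3 * ∑ k, ⟪u k, x k⟫ ≤ ∑ k, ‖u k - u (k + 1)‖ * dist (x k) (x (k + 1)) := by
  have hid : 3 * ∑ k, ⟪u k, x k⟫ = ∑ k, ⟪u k - u (k + 1), x k - x (k + 1)⟫ := by
    rw [Fin.sum_univ_three] at hu
    simp only [Fin.sum_univ_three, Fin.reduceAdd, inner_sub_left, inner_sub_right]
    rw [eq_neg_of_add_eq_zero_right hu]
    simp only [inner_neg_left, inner_add_left]
    ring
  rw [hid]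
  exact sum_le_sum fun k _ => (real_inner_le_norm _ _).trans_eq (by rw [dist_eq_norm])

theorem dist_midpoint_midpoint_eq_half_dist (A B C : E) :
    dist (midpoint ℝ A B) (midpoint ℝ B C) = dist A C / 2 := by
  rw [dist_eq_norm, midpoint_eq_smul_add, midpoint_eq_smul_add, ← smul_sub,
    show A + B - (B + C) = A - C by abel, norm_smul, ← dist_eq_norm]
  norm_num
  ring

theorem interior_setOf_le_inner {u : E} (hu : u ≠ 0) (c : ℝ) (G : E) :
    interior {x | c ≤ ⟪u, x - G⟫} = {x | c < ⟪u, x - G⟫} := by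
  have hne : innerSL ℝ u ≠ 0 := fun h0 =>
    hu (norm_eq_zero.1 (by rw [← innerSL_apply_norm ℝ u, h0, norm_zero]))
  have hopen : IsOpenMap fun x => ⟪u, x - G⟫ :=
    ((innerSL ℝ u).isOpenMap_of_ne_zero hne).comp (Homeomorph.subRight G).isOpenMap
  have hcont : Continuous fun x => ⟪u, x - G⟫ := by fun_prop
  change interior ((fun x => ⟪u, x - G⟫) ⁻¹' Set.Ici c) = (fun x => ⟪u, x - G⟫) ⁻¹' Set.Ioi c
  rw [← hopen.preimage_interior_eq_interior_preimage hcont, interior_Ici]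

noncomputable def breadth (K : Set E) (p : E) : ℝ :=
  sSup ((fun q => ⟪p, q⟫) '' K) - sInf ((fun q => ⟪p, q⟫) '' K)

theorem widthB_eq_sInf_breadth {n : ℕ} (K : Set (EuclideanSpace ℝ (Fin n))) :
    widthB K = sInf {w | ∃ p, ‖p‖ = 1 ∧ w = breadth K p} :=
  rfl

theorem inner_sub_le_breadth {K : Set E} (hK : IsCompact K) {x y : E} (hx : x ∈ K) (hy : y ∈ K)
    (p : E) : ⟪p, x - y⟫ ≤ breadth K p := by
  have himg := hK.image (by fun_prop : Continuous fun q => ⟪p, q⟫)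
  rw [inner_sub_right, breadth]
  linarith [le_csSup himg.bddAbove (Set.mem_image_of_mem _ hx),
    csInf_le himg.bddBelow (Set.mem_image_of_mem _ hy)]

theorem breadth_le {K : Set E} (hne : K.Nonempty) {p : E} {lo hi : ℝ}
    (hK : ∀ x ∈ K, ⟪p, x⟫ ∈ Set.Icc lo hi) : breadth K p ≤ hi - lo :=
  sub_le_sub (csSup_le (hne.image _) (by rintro _ ⟨x, hx, rfl⟩; exact (hK x hx).2))
    (le_csInf (hne.image _) (by rintro _ ⟨x, hx, rfl⟩; exact (hK x hx).1))

/-- For every `G`, the points `G + a k` are the vertices of an equilateral triangle with centroid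
`G`, circumradius `r` and side `√3 r`. -/
structure IsMercedesFrame (a : Fin 3 → E) (r : ℝ) : Prop where
  sum_eq_zero : ∑ k, a k = 0
  norm_eq : ∀ k, ‖a k‖ = r

theorem isMercedesFrame_of_norm_sub_eq {x y z : E} (hsum : x + y + z = 0)
    (h₁ : ‖x - y‖ = ‖y - z‖) (h₂ : ‖y - z‖ = ‖z - x‖) : IsMercedesFrame ![x, y, z] ‖x‖ := by
  have hz : z = -x - y := by rw [← sub_eq_zero, ← hsum]; abel
  subst hz
  have e₁ := congrArg (· ^ 2) h₁
  have e₂ := congrArg (· ^ 2) h₂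
  simp only [show y - (-x - y) = x + (2 : ℝ) • y by module,
    show -x - y - x = -((2 : ℝ) • x + y) by module, norm_neg, norm_sub_sq_real, norm_add_sq_real,
    norm_smul, real_inner_smul_left, real_inner_smul_right] at e₁ e₂
  norm_num at e₁ e₂
  have hyx : ‖y‖ = ‖x‖ := by
    refine (sq_eq_sq₀ (norm_nonneg _) (norm_nonneg _)).1 ?_
    nlinarith
  have hzx : ‖-x - y‖ = ‖x‖ := by
    refine (sq_eq_sq₀ (norm_nonneg _) (norm_nonneg _)).1 ?_
    rw [show -x - y = -(x + y) by abel, norm_neg, norm_add_sq_real]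
    nlinarith
  refine ⟨by simp [Fin.sum_univ_three], fun k => ?_⟩
  fin_cases k <;> simp [hyx, hzx]

namespace IsMercedesFrame

variable {a : Fin 3 → E} {r : ℝ} (h : IsMercedesFrame a r)
include h

theorem inner_eq (i j : Fin 3) : ⟪a i, a j⟫ = if i = j then r ^ 2 else -(r ^ 2 / 2) := by
  have row : ∀ i, ∑ j, ⟪a i, a j⟫ = 0 := fun i => by
    rw [← inner_sum, h.sum_eq_zero, inner_zero_right]
  have diag : ∀ i, ⟪a i, a i⟫ = r ^ 2 := fun i => by
    rw [real_inner_self_eq_norm_sq, h.norm_eq]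
  simp only [Fin.sum_univ_three] at row
  split_ifs with hij
  · exact hij ▸ diag i
  · fin_cases i <;> fin_cases j <;>
      simp only [Fin.reduceFinMk, Fin.zero_eta, Fin.mk_one, not_true_eq_false] at hij ⊢ <;>
      linarith [row 0, row 1, row 2, diag 0, diag 1, diag 2, real_inner_comm (a 0) (a 1),
        real_inner_comm (a 1) (a 2), real_inner_comm (a 0) (a 2)]

theorem inner_sum_smul (c : Fin 3 → ℝ) (i : Fin 3) :
    ⟪a i, ∑ k, c k • a k⟫ = 3 * r ^ 2 / 2 * c i - r ^ 2 / 2 * ∑ k, c k := by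
  simp_rw [inner_sum, real_inner_smul_right, h.inner_eq]
  fin_cases i <;> simp [Fin.sum_univ_three] <;> ring

theorem sum_inner_eq_zero (x : E) : ∑ k, ⟪a k, x⟫ = 0 := by
  rw [← sum_inner, h.sum_eq_zero, inner_zero_left]

theorem norm_sub_eq {i j : Fin 3} (hij : i ≠ j) : ‖a i - a j‖ = √3 * r := by
  have hr : 0 ≤ r := h.norm_eq i ▸ norm_nonneg _
  rw [← Real.sqrt_sq (norm_nonneg _), norm_sub_sq_real, h.norm_eq, h.norm_eq, h.inner_eq,
    if_neg hij, show r ^ 2 - 2 * -(r ^ 2 / 2) + r ^ 2 = 3 * r ^ 2 by ring,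
    Real.sqrt_mul (by norm_num), Real.sqrt_sq hr]

theorem exists_inner_eq (hr : r ≠ 0) {c : Fin 3 → ℝ} (hc : ∑ k, c k = 0) :
    ∃ t, ∀ k, ⟪a k, t⟫ = c k :=
  ⟨(2 / (3 * r ^ 2)) • ∑ k, c k • a k, fun k => by
    rw [real_inner_smul_right, h.inner_sum_smul, hc]
    field_simp
    ring⟩

theorem span_eq_top (hr : r ≠ 0) (hE : Module.finrank ℝ E = 2) :
    Submodule.span ℝ (Set.range ![a 0, a 1]) = ⊤ := by
  refine LinearIndependent.span_eq_top_of_card_eq_finrank ?_ (by simp [hE])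
  refine LinearIndependent.pair_iff.2 fun s t hst => ?_
  have e₀ := congrArg (⟪a 0, ·⟫) hst
  have e₁ := congrArg (⟪a 1, ·⟫) hst
  simp only [inner_add_right, real_inner_smul_right, h.inner_eq, inner_zero_right] at e₀ e₁
  norm_num at e₀ e₁
  have hr2 : r ^ 2 ≠ 0 := pow_ne_zero 2 hr
  constructor
  · refine (mul_eq_zero.1 ?_).resolve_left hr2
    linear_combination (4 / 3 : ℝ) * e₀ + (2 / 3 : ℝ) * e₁
  · refine (mul_eq_zero.1 ?_).resolve_left hr2
    linear_combination (2 / 3 : ℝ) * e₀ + (4 / 3 : ℝ) * e₁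

theorem sum_inner_smul_eq (hr : r ≠ 0) (hE : Module.finrank ℝ E = 2) (x : E) :
    ∑ k, ⟪a k, x⟫ • a k = (3 * r ^ 2 / 2) • x := by
  set z := ∑ k, ⟪a k, x⟫ • a k - (3 * r ^ 2 / 2) • x
  have hz : ∀ i, ⟪a i, z⟫ = 0 := fun i => by
    rw [inner_sub_right, h.inner_sum_smul, h.sum_inner_eq_zero, real_inner_smul_right]
    ring
  obtain ⟨c, hc⟩ := (Submodule.mem_span_range_iff_exists_fun ℝ).1
    (h.span_eq_top hr hE ▸ Submodule.mem_top : z ∈ Submodule.span ℝ (Set.range ![a 0, a 1]))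
  have hzz : ⟪∑ i, c i • ![a 0, a 1] i, z⟫ = 0 := by
    simp only [Fin.sum_univ_two, Matrix.cons_val_zero, Matrix.cons_val_one, inner_add_left,
      real_inner_smul_left, hz, mul_zero, add_zero]
  rw [hc] at hzz
  exact sub_eq_zero.1 (inner_self_eq_zero.1 hzz)

theorem convexHull_eq (hr : r ≠ 0) (hE : Module.finrank ℝ E = 2) (G : E) :
    convexHull ℝ (Set.range fun k => G + a k) = {x | ∀ k, -(r ^ 2 / 2) ≤ ⟪a k, x - G⟫} := by
  refine Set.Subset.antisymm (convexHull_min ?_ ?_) fun x hx => ?_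
  · rintro _ ⟨j, rfl⟩ k
    rw [add_sub_cancel_left, h.inner_eq]
    split_ifs <;> nlinarith [sq_nonneg r]
  · rw [Set.ofPred_forall]
    refine convex_iInter fun k => ?_
    have : {x | -(r ^ 2 / 2) ≤ ⟪a k, x - G⟫} = {x | -(r ^ 2 / 2) + ⟪a k, G⟫ ≤ ⟪a k, x⟫} := by
      ext x
      simp only [Set.mem_ofPred_eq, inner_sub_right]
      constructor <;> intro <;> linarith
    rw [this]
    exact convex_halfSpace_ge (innerₛₗ ℝ (a k)).isLinear _
  · -- barycentric coordinates of `x`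
    set w : Fin 3 → ℝ := fun k => (r ^ 2 + 2 * ⟪a k, x - G⟫) / (3 * r ^ 2)
    have hw : ∑ k, w k = 1 := by
      simp only [w, ← sum_div, sum_add_distrib, ← mul_sum, h.sum_inner_eq_zero]
      field_simp
      simp [mul_comm]
    have hwa : ∑ k, w k • a k = x - G := by
      have hsplit : ∀ k, w k • a k =
          (3 * r ^ 2)⁻¹ • (r ^ 2 • a k) + (2 / (3 * r ^ 2)) • (⟪a k, x - G⟫ • a k) :=
        fun k => by simp only [w]; module
      rw [sum_congr rfl fun k _ => hsplit k, sum_add_distrib, ← smul_sum, ← smul_sum, ← smul_sum,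
        h.sum_eq_zero, h.sum_inner_smul_eq hr hE, smul_zero, smul_zero, zero_add, smul_smul,
        show 2 / (3 * r ^ 2) * (3 * r ^ 2 / 2) = (1 : ℝ) by field_simp, one_smul]
    refine mem_convexHull_of_exists_fintype w (fun k => G + a k)
      (fun k => div_nonneg (by linarith [hx k]) (by positivity)) hw (fun k => ⟨k, rfl⟩) ?_
    simp only [smul_add, sum_add_distrib, ← sum_smul, hw, one_smul, hwa, add_sub_cancel]

theorem interior_convexHull_eq (hr : r ≠ 0) (hE : Module.finrank ℝ E = 2) (G : E) :
    interior (convexHull ℝ (Set.range fun k => G + a k)) =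
      {x | ∀ k, -(r ^ 2 / 2) < ⟪a k, x - G⟫} := by
  have hne : ∀ k, a k ≠ 0 := fun k hk => hr (by rw [← h.norm_eq k, hk, norm_zero])
  rw [h.convexHull_eq hr hE G, Set.ofPred_forall, interior_iInter_of_finite, Set.ofPred_forall]
  exact Set.iInter_congr fun k => interior_setOf_le_inner (hne k) _ G

theorem convexHull_subset_closedBall (G : E) :
    convexHull ℝ (Set.range fun k => G + a k) ⊆ Metric.closedBall G r :=
  convexHull_min (by rintro _ ⟨k, rfl⟩; simp [h.norm_eq]) (convex_closedBall G r)

theorem le_breadth (hr : 0 < r) (hE : Module.finrank ℝ E = 2) (G : E) {p : E} (hp : ‖p‖ = 1) :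
    3 * r / 2 ≤ breadth (convexHull ℝ (Set.range fun k => G + a k)) p := by
  set K := convexHull ℝ (Set.range fun k => G + a k)
  have hK : IsCompact K := (Set.finite_range _).isCompact_convexHull (𝕜 := ℝ)
  have hmem : ∀ k, G + a k ∈ K := fun k => subset_convexHull ℝ _ ⟨k, rfl⟩
  have hpair : ∀ i j, 9 * r ^ 2 / 4 ≤ (⟪a i, p⟫ - ⟪a j, p⟫) ^ 2 → 3 * r / 2 ≤ breadth K p := by
    intro i j hij
    have hij' : |3 * r / 2| ≤ |⟪a i, p⟫ - ⟪a j, p⟫| := sq_le_sq.1 (by linarith)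
    have h₁ := inner_sub_le_breadth hK (hmem i) (hmem j) p
    have h₂ := inner_sub_le_breadth hK (hmem j) (hmem i) p
    simp only [add_sub_add_left_eq_sub, inner_sub_right, real_inner_comm (a i) p,
      real_inner_comm (a j) p] at h₁ h₂
    rw [abs_of_pos (by positivity)] at hij'
    rcases le_abs'.1 hij' with h' | h' <;> linarith
  have hsq : ⟪a 0, p⟫ ^ 2 + ⟪a 1, p⟫ ^ 2 + ⟪a 2, p⟫ ^ 2 = 3 * r ^ 2 / 2 := by
    have := congrArg (⟪·, p⟫) (h.sum_inner_smul_eq hr.ne' hE p)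
    rw [sum_inner, Fin.sum_univ_three] at this
    simp only [real_inner_smul_left, real_inner_self_eq_norm_sq, hp] at this
    linear_combination this
  have hsum := h.sum_inner_eq_zero p
  rw [Fin.sum_univ_three] at hsum
  rcases sq_sub_ge_of_add_add_eq_zero hsum with h' | h' | h'
  · exact hpair 0 1 (by linarith)
  · exact hpair 1 2 (by linarith)
  · exact hpair 2 0 (by linarith)

theorem breadth_neg_inv_smul_le (hr : 0 < r) (hE : Module.finrank ℝ E = 2) (G : E) :
    breadth (convexHull ℝ (Set.range fun k => G + a k)) (-(r⁻¹ • a 0)) ≤ 3 * r / 2 := by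
  set p := -(r⁻¹ • a 0)
  have hp : ‖p‖ = 1 := by
    rw [norm_neg, norm_smul, h.norm_eq, norm_inv, Real.norm_of_nonneg hr.le, inv_mul_cancel₀ hr.ne']
  have hbound : ∀ x ∈ convexHull ℝ (Set.range fun k => G + a k),
      ⟪p, x⟫ ∈ Set.Icc (⟪p, G⟫ - r) (⟪p, G⟫ + r / 2) := by
    intro x hx
    have hhalf : -(r ^ 2 / 2) ≤ ⟪a 0, x - G⟫ := by
      rw [h.convexHull_eq hr.ne' hE G] at hx; exact hx 0
    have hball : ‖x - G‖ ≤ r := mem_closedBall_iff_norm.1 (h.convexHull_subset_closedBall G hx)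
    have hcs := neg_le_of_abs_le (abs_real_inner_le_norm p (x - G))
    have hx' : ⟪p, x⟫ = ⟪p, G⟫ + ⟪p, x - G⟫ := by rw [inner_sub_right]; ring
    have hpa : ⟪p, x - G⟫ = -(r⁻¹ * ⟪a 0, x - G⟫) := by
      rw [inner_neg_left, real_inner_smul_left]
    rw [hp, one_mul] at hcs
    constructor
    · linarith
    · rw [hx', hpa]
      have : -(r⁻¹ * ⟪a 0, x - G⟫) ≤ r / 2 := by
        rw [neg_le, ← div_eq_inv_mul, le_div_iff₀ hr]; nlinarith
      linarith
  have := breadth_le (Set.range_nonempty _).convexHull hbound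
  linarith

end IsMercedesFrame

namespace IsMercedesFrame

local notation "E²" => EuclideanSpace ℝ (Fin 2)

variable {a : Fin 3 → E²} {r : ℝ} (h : IsMercedesFrame a r)
include h

theorem widthB_convexHull_eq (hr : 0 < r) (G : E²) :
    widthB (convexHull ℝ (Set.range fun k => G + a k)) = 3 * r / 2 := by
  have hE : Module.finrank ℝ E² = 2 := finrank_euclideanSpace_fin
  set p₀ : E² := -(r⁻¹ • a 0)
  have hp₀ : ‖p₀‖ = 1 := by
    rw [norm_neg, norm_smul, h.norm_eq, norm_inv, Real.norm_of_nonneg hr.le, inv_mul_cancel₀ hr.ne']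
  have hlow : ∀ w ∈ {w | ∃ p, ‖p‖ = 1 ∧ w = breadth (convexHull ℝ (Set.range fun k => G + a k)) p},
      3 * r / 2 ≤ w := by
    rintro _ ⟨p, hp, rfl⟩
    exact h.le_breadth hr hE G hp
  rw [widthB_eq_sInf_breadth]
  exact le_antisymm
    ((csInf_le ⟨_, hlow⟩ ⟨p₀, hp₀, rfl⟩).trans (h.breadth_neg_inv_smul_le hr hE G))
    (le_csInf ⟨_, p₀, hp₀, rfl⟩ hlow)

theorem sum_inner_le_of_notTranslatableInto (hr : r ≠ 0) (G : E²) {m : ℕ} {q : ℕ → E²}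
    (hq : NotTranslatableInto m q (convexHull ℝ (Set.range fun k => G + a k))) {j : Fin 3 → ℕ}
    (hj : ∀ k, ∀ i < m, ⟪a k, q (j k)⟫ ≤ ⟪a k, q i⟫) :
    ∑ k, ⟪a k, q (j k) - G⟫ ≤ -(3 * r ^ 2 / 2) := by
  by_contra! hlt
  set c : Fin 3 → ℝ := fun k => ⟪a k, q (j k) - G⟫ + r ^ 2 / 2
  have hc : 0 < ∑ k, c k := by simp only [c, Fin.sum_univ_three] at hlt ⊢; linarith
  -- the translation spreading the total slack evenly over the three sides
  obtain ⟨t, ht⟩ := h.exists_inner_eq hr (c := fun k => (∑ l, c l) / 3 - c k)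
    (by simp only [Fin.sum_univ_three]; ring)
  obtain ⟨i, hi, hout⟩ := hq t
  refine hout ?_
  rw [h.interior_convexHull_eq hr finrank_euclideanSpace_fin G]
  intro k
  have := hj k i hi
  rw [add_sub_right_comm, inner_add_right, ht, inner_sub_right]
  simp only [c, inner_sub_right] at hc ⊢
  linarith

theorem le_sum_norm_of_notTranslatableInto (hr : 0 < r) (G : E²) {m : ℕ} (hm : 0 < m)
    {q : ℕ → E²} (hq : NotTranslatableInto m q (convexHull ℝ (Set.range fun k => G + a k))) :
    3 * √3 * r / 2 ≤ ∑ i ∈ range m, ‖q ((i + 1) % m) - q i‖ := by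
  choose j hjm hjmin using fun k =>
    exists_min_image (range m) (fun i => ⟪a k, q i⟫) (nonempty_range_iff.2 hm.ne')
  have hslack := h.sum_inner_le_of_notTranslatableInto hr.ne' G hq (j := j)
    fun k i hi => hjmin k i (mem_range.2 hi)
  have hkey := three_mul_sum_inner_le (u := fun k => -a k) (x := fun k => q (j k) - G)
    (by simp [h.sum_eq_zero])
  have hside : ∀ k : Fin 3, ‖-a k - -a (k + 1)‖ = √3 * r := fun k => by
    rw [neg_sub_neg, h.norm_sub_eq (by fin_cases k <;> decide)]
  simp only [hside, dist_sub_right, inner_neg_left, sum_neg_distrib, ← mul_sum] at hkey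
  have hper := sum_dist_le_sum_range_dist q j fun k => mem_range.1 (hjm k)
  have hnorm : ∑ i ∈ range m, dist (q i) (q ((i + 1) % m)) =
      ∑ i ∈ range m, ‖q ((i + 1) % m) - q i‖ :=
    sum_congr rfl fun i _ => by rw [dist_comm, dist_eq_norm]
  have h3 : √3 * √3 = 3 := Real.mul_self_sqrt (by norm_num)
  refine le_of_mul_le_mul_left ?_ (by positivity : 0 < √3 * r)
  calc √3 * r * (3 * √3 * r / 2) = 3 * (3 * r ^ 2 / 2) := by
        linear_combination (3 * r ^ 2 / 2) * h3
    _ ≤ 3 * -∑ k, ⟪a k, q (j k) - G⟫ := by linarith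
    _ ≤ √3 * r * ∑ k, dist (q (j k)) (q (j (k + 1))) := hkey
    _ ≤ √3 * r * ∑ i ∈ range m, ‖q ((i + 1) % m) - q i‖ := by rw [← hnorm]; gcongr

/- `G - a k / 2` is the midpoint of the side opposite to the vertex `G + a k`. -/
theorem notTranslatableInto_midpoints (hr : r ≠ 0) (G : E²) :
    NotTranslatableInto 3 (fun i => G - (2 : ℝ)⁻¹ • a (Fin.ofNat 3 i))
      (convexHull ℝ (Set.range fun k => G + a k)) := by
  intro t
  by_contra! hin
  rw [h.interior_convexHull_eq hr finrank_euclideanSpace_fin G] at hin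
  have hpos : ∀ k, 0 < ⟪a k, t⟫ := fun k => by
    have := hin k k.isLt k
    rw [Fin.ofNat_val_eq_self, sub_add_comm, add_sub_cancel_right, inner_sub_right,
      real_inner_smul_right, h.inner_eq, if_pos rfl] at this
    linarith
  have := h.sum_inner_eq_zero t
  rw [Fin.sum_univ_three] at this
  linarith [hpos 0, hpos 1, hpos 2]

theorem sum_norm_midpoints (G : E²) :
    ∑ i ∈ range 3, ‖(G - (2 : ℝ)⁻¹ • a (Fin.ofNat 3 ((i + 1) % 3))) -
      (G - (2 : ℝ)⁻¹ • a (Fin.ofNat 3 i))‖ = 3 * √3 * r / 2 := by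
  have hside : ∀ i ∈ range 3, ‖(G - (2 : ℝ)⁻¹ • a (Fin.ofNat 3 ((i + 1) % 3))) -
      (G - (2 : ℝ)⁻¹ • a (Fin.ofNat 3 i))‖ = √3 * r / 2 := fun i hi => by
    have hne : Fin.ofNat 3 i ≠ Fin.ofNat 3 ((i + 1) % 3) := by
      have := mem_range.1 hi
      interval_cases i <;> decide
    rw [sub_sub_sub_cancel_left, ← smul_sub, norm_smul, h.norm_sub_eq hne]
    norm_num
    ring
  rw [sum_congr rfl hside, sum_const, card_range]
  ring

theorem xiB_convexHull_eq (hr : 0 < r) (G : E²) :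
    xiB (convexHull ℝ (Set.range fun k => G + a k)) = 3 * √3 * r / 2 := by
  refine IsLeast.csInf_eq ⟨⟨3, by norm_num, _, h.notTranslatableInto_midpoints hr.ne' G,
    (h.sum_norm_midpoints G).symm⟩, ?_⟩
  rintro _ ⟨m, hm, q, hq, rfl⟩
  exact h.le_sum_norm_of_notTranslatableInto hr G (by omega) hq

end IsMercedesFrame

/-- For an equilateral triangle `Δ`, `ξ_B(Δ) = √3 · w_B(Δ)`; equivalently, the perimeter
of the medial triangle equals `√3` times the altitude (= width) of `Δ`. Hence
`ξ_B(K) ≥ √3 w_B(K)` is sharp. -/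
theorem xiB_equilateral_eq_sqrt3_width (A B C : EuclideanSpace ℝ (Fin 2))
    (hpos : 0 < dist A B) (h1 : dist A B = dist B C) (h2 : dist B C = dist C A) :
    xiB (convexHull ℝ {A, B, C}) = Real.sqrt 3 * widthB (convexHull ℝ {A, B, C}) ∧
    dist (midpoint ℝ A B) (midpoint ℝ B C) + dist (midpoint ℝ B C) (midpoint ℝ C A) +
        dist (midpoint ℝ C A) (midpoint ℝ A B) =
      Real.sqrt 3 * widthB (convexHull ℝ {A, B, C}) := by
  set G : EuclideanSpace ℝ (Fin 2) := (3 : ℝ)⁻¹ • (A + B + C)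
  have hframe : IsMercedesFrame ![A - G, B - G, C - G] ‖A - G‖ :=
    isMercedesFrame_of_norm_sub_eq (by simp only [G]; module)
      (by simpa only [sub_sub_sub_cancel_right, ← dist_eq_norm] using h1)
      (by simpa only [sub_sub_sub_cancel_right, ← dist_eq_norm] using h2)
  have hside : dist A B = √3 * ‖A - G‖ := by
    rw [dist_eq_norm, ← sub_sub_sub_cancel_right A B G]
    exact hframe.norm_sub_eq (i := 0) (j := 1) (by decide)
  have hr : 0 < ‖A - G‖ := pos_of_mul_pos_right (hside ▸ hpos) (Real.sqrt_nonneg 3)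
  have hΔ : ({A, B, C} : Set _) = Set.range fun k => G + ![A - G, B - G, C - G] k := by
    ext x
    simp [Fin.exists_fin_succ, eq_comm]
  rw [hΔ, hframe.xiB_convexHull_eq hr G, hframe.widthB_convexHull_eq hr G,
    dist_midpoint_midpoint_eq_half_dist, dist_midpoint_midpoint_eq_half_dist,
    dist_midpoint_midpoint_eq_half_dist, dist_comm A C, dist_comm B A, dist_comm C B, ← h2, ← h1,
    hside]
  constructor <;> ring
end

section
/- Let K ⊂ ℝⁿ be a convex body whose center of gravity (centroid with respect to Lebesgue measure) is at the origin. Then −K ⊆ n·K, and consequently the difference body satisfies K − K ⊆ (n+1)·K. -/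
/-!
Fix a continuous linear functional `f`, a point `x ∈ K` and `0 < s ≤ 1`. The homothetic copy
`L = x + s • (K - x)` lies in `K`, has volume `sⁿ |K|`, and carries the fraction `sⁿ⁺¹` of
`∫_K f(y - x) dy`, which equals `-f(x) |K|` because the centroid is `0`. On `K \ L` the integrand is
at most `max_K f - f(x)`, so `(1 - sⁿ⁺¹)(-f x) ≤ (1 - sⁿ)(max_K f - f x)`; dividing by `1 - s` and
letting `s → 1` gives `-f(x) ≤ n · max_K f`. As this holds for every `f`, separation puts `-x / n`
in `K`. Finally `K - K ⊆ K + n • K = (n + 1) • K` by convexity.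
-/

open scoped RealInnerProductSpace Pointwise
open MeasureTheory

open Module Set AffineMap

section Homothety

variable {E : Type*} [NormedAddCommGroup E]

theorem hasFDerivAt_homothety {𝕜 : Type*} [NontriviallyNormedField 𝕜] [NormedSpace 𝕜 E]
    (x : E) (r : 𝕜) (y : E) : HasFDerivAt (homothety x r) (r • ContinuousLinearMap.id 𝕜 E) y := by
  have : ⇑(homothety x r) = fun y => r • y + (x - r • x) := by
    ext y
    simp only [homothety_apply, vsub_eq_sub, smul_sub, vadd_eq_add]
    abel
  rw [this]
  exact ((hasFDerivAt_id y).const_smul r).add_const _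

variable [NormedSpace ℝ E] [FiniteDimensional ℝ E] [MeasurableSpace E] [BorelSpace E]
  (μ : Measure E) [μ.IsAddHaarMeasure]

theorem setIntegral_image_homothety {F : Type*} [NormedAddCommGroup F] [NormedSpace ℝ F]
    (x : E) {r : ℝ} (hr : r ≠ 0) {K : Set E} (hK : MeasurableSet K) (g : E → F) :
    ∫ y in homothety x r '' K, g y ∂μ = |r| ^ finrank ℝ E • ∫ y in K, g (homothety x r y) ∂μ := by
  rw [integral_image_eq_integral_abs_det_fderiv_smul μ hK
    (fun y _ => (hasFDerivAt_homothety x r y).hasFDerivWithinAt)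
    (homothety_injective x hr).injOn, integral_smul]
  simp [ContinuousLinearMap.det, abs_pow]

theorem one_sub_pow_succ_mul_setIntegral_le {K : Set E} (hconv : Convex ℝ K)
    (hcomp : IsCompact K) {x : E} (hx : x ∈ K) (f : StrongDual ℝ E) {M : ℝ}
    (hM : ∀ y ∈ K, f y ≤ M) {s : ℝ} (hs0 : 0 < s) (hs1 : s ≤ 1) :
    (1 - s ^ (finrank ℝ E + 1)) * ∫ y in K, f (y - x) ∂μ
      ≤ (1 - s ^ finrank ℝ E) * (M - f x) * μ.real K := by
  set L := homothety x s '' K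
  have hLK : L ⊆ K := by
    rintro _ ⟨y, hy, rfl⟩
    rw [homothety_eq_lineMap]
    exact hconv.lineMap_mem hx hy ⟨hs0.le, hs1⟩
  have hKm : MeasurableSet K := hcomp.isClosed.measurableSet
  have hLm : MeasurableSet L := (hcomp.image (homothety_continuous x s)).isClosed.measurableSet
  have hintegrable : IntegrableOn (fun y => f (y - x)) K μ :=
    (by fun_prop : Continuous fun y => f (y - x)).continuousOn.integrableOn_compact hcomp
  -- `f (homothety x s y - x) = s * f (y - x)`, and the change of variables contributes `sⁿ`
  have hL_int : ∫ y in L, f (y - x) ∂μ = s ^ (finrank ℝ E + 1) * ∫ y in K, f (y - x) ∂μ := by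
    rw [setIntegral_image_homothety μ x hs0.ne' hKm, abs_of_pos hs0]
    simp [homothety_apply, integral_const_mul, pow_succ, mul_assoc]
  have hL_vol : μ.real L = s ^ finrank ℝ E * μ.real K := by
    simp [L, measureReal_def, Measure.addHaar_image_homothety, abs_of_pos hs0,
      ENNReal.toReal_mul, hs0.le]
  calc (1 - s ^ (finrank ℝ E + 1)) * ∫ y in K, f (y - x) ∂μ
      = ∫ y in K \ L, f (y - x) ∂μ := by rw [setIntegral_sdiff hLm hintegrable hLK, hL_int]; ring
    _ ≤ ∫ y in K \ L, (M - f x) ∂μ := by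
        refine setIntegral_mono_on (hintegrable.mono_set sdiff_subset)
          (integrableOn_const (measure_ne_top_of_subset sdiff_subset hcomp.measure_ne_top))
          (hKm.diff hLm) fun y hy => ?_
        simpa using hM y hy.1
    _ = (1 - s ^ finrank ℝ E) * (M - f x) * μ.real K := by
        rw [setIntegral_const, measureReal_sdiff hLK hLm hcomp.measure_ne_top, hL_vol,
          smul_eq_mul]
        ring

end Homothety

open Filter Topology Finset in
theorem succ_mul_le_of_forall_one_sub_pow_mul_le {a b : ℝ} {d : ℕ}
    (h : ∀ s ∈ Ioo (0 : ℝ) 1, (1 - s ^ (d + 1)) * a ≤ (1 - s ^ d) * b) :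
    (d + 1) * a ≤ d * b := by
  have hgeom : ∀ s ∈ Ioo (0 : ℝ) 1,
      (∑ i ∈ range (d + 1), s ^ i) * a ≤ (∑ i ∈ range d, s ^ i) * b := by
    intro s hs
    have hs' := h s hs
    rw [← mul_neg_geom_sum, ← mul_neg_geom_sum, mul_assoc, mul_assoc] at hs'
    exact le_of_mul_le_mul_left hs' (sub_pos.2 hs.2)
  have hlim : ∀ (k : ℕ) (c : ℝ),
      Tendsto (fun s : ℝ => (∑ i ∈ range k, s ^ i) * c) (𝓝[<] 1) (𝓝 (k * c)) := by
    intro k c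
    simpa using ((by fun_prop : Continuous fun s : ℝ => (∑ i ∈ range k, s ^ i) * c).tendsto
      1).mono_left nhdsWithin_le_nhds
  simpa using le_of_tendsto_of_tendsto (hlim (d + 1) a) (hlim d b)
    (eventually_of_mem (Ioo_mem_nhdsLT zero_lt_one) hgeom)

section Centroid

variable {E : Type*} [NormedAddCommGroup E] [NormedSpace ℝ E] [FiniteDimensional ℝ E]
  [MeasurableSpace E] [BorelSpace E] (μ : Measure E) [μ.IsAddHaarMeasure]
  {K : Set E} (hconv : Convex ℝ K) (hcomp : IsCompact K) (hvol : μ K ≠ 0)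
  (hcent : ⨍ y in K, y ∂μ = 0)
include hconv hcomp hvol hcent

theorem neg_le_finrank_mul_of_setAverage_eq_zero {x : E} (hx : x ∈ K) (f : StrongDual ℝ E)
    {M : ℝ} (hM : ∀ y ∈ K, f y ≤ M) : -f x ≤ finrank ℝ E * M := by
  have hV : 0 < μ.real K := ENNReal.toReal_pos hvol hcomp.measure_ne_top
  have hintegral : ∫ y in K, f (y - x) ∂μ = -f x * μ.real K := by
    have hid : IntegrableOn (fun y => y) K μ :=
      continuous_id.continuousOn.integrableOn_compact hcomp
    simp_rw [map_sub]
    rw [integral_sub (f.integrable_comp hid) (integrableOn_const hcomp.measure_ne_top),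
      f.integral_comp_comm hid, ← measure_smul_setAverage _ hcomp.measure_ne_top, hcent,
      setIntegral_const]
    simp [mul_comm]
  have hlim := succ_mul_le_of_forall_one_sub_pow_mul_le (d := finrank ℝ E)
      (a := -f x * μ.real K) (b := (M - f x) * μ.real K) fun s hs => by
    have := one_sub_pow_succ_mul_setIntegral_le μ hconv hcomp hx f hM hs.1 hs.2.le
    rw [hintegral] at this
    linarith
  have hV_mul : -f x * μ.real K ≤ finrank ℝ E * M * μ.real K := by linarith
  exact le_of_mul_le_mul_right hV_mul hV

theorem neg_subset_finrank_smul_of_setAverage_eq_zero : -K ⊆ (finrank ℝ E : ℝ) • K := by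
  have hne : K.Nonempty := nonempty_of_measure_ne_zero hvol
  intro z hz
  rcases eq_or_ne (finrank ℝ E) 0 with hd | hd
  · rw [hd, Nat.cast_zero, zero_smul_set hne, finrank_zero_iff_forall_zero.1 hd z]
    exact zero_mem_zero
  rw [mem_smul_set_iff_inv_smul_mem₀ (Nat.cast_ne_zero.2 hd),
    ← iInter_halfSpaces_eq hconv hcomp.isClosed, mem_iInter]
  intro f
  obtain ⟨y, hy, hmax⟩ := hcomp.exists_isMaxOn hne f.continuous.continuousOn
  refine ⟨y, hy, ?_⟩
  have := neg_le_finrank_mul_of_setAverage_eq_zero μ hconv hcomp hvol hcent hz f hmax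
  rw [map_smul, smul_eq_mul, inv_mul_le_iff₀ (by positivity)]
  simpa using this

end Centroid

theorem Convex.sub_subset_add_one_smul {𝕜 V : Type*} [Field 𝕜] [LinearOrder 𝕜]
    [IsStrictOrderedRing 𝕜] [AddCommGroup V] [Module 𝕜 V] {K : Set V} (hK : Convex 𝕜 K) {c : 𝕜}
    (hc : 0 ≤ c) (h : -K ⊆ c • K) : K - K ⊆ (c + 1) • K := by
  rw [add_comm, hK.add_smul zero_le_one hc, one_smul, sub_eq_add_neg]
  exact add_subset_add_left h

/-- If the centroid of a convex body `K ⊂ ℝⁿ` is at the origin, then `−K ⊆ n·K`, and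
consequently `K − K ⊆ (n+1)·K`. -/
theorem neg_subset_smul_of_centroid_zero (n : ℕ) (K : Set (EuclideanSpace ℝ (Fin n)))
    (hK : IsConvexBody K)
    (hcent : (⨍ x in K, x ∂volume) = 0) :
    -K ⊆ (n : ℝ) • K ∧ K - K ⊆ ((n : ℝ) + 1) • K := by
  obtain ⟨hcomp, hconv, hinterior⟩ := hK
  have hneg := neg_subset_finrank_smul_of_setAverage_eq_zero volume hconv hcomp
    (Measure.measure_pos_of_nonempty_interior _ hinterior).ne' hcent
  rw [finrank_euclideanSpace_fin] at hneg
  exact ⟨hneg, hconv.sub_subset_add_one_smul n.cast_nonneg hneg⟩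
end

section
/- Let ABC be a nondegenerate triangle in ℝ² with angles α = ∠BAC, β = ∠ABC, side length c = |AB|, and semiperimeter p = (|BC|+|CA|+|AB|)/2 ≤ 1. Let A₁ be the point at distance 1 from A along the interior angle bisector from A, and B₁ the point at distance 1 from B along the interior angle bisector from B. Then |A₁B₁|² ≥ 1 + (1−c)² + 2c(1 − cos(α/2))(1 − cos(β/2)) > 1. -/
open scoped RealInnerProductSpace Pointwise
open MeasureTheory

/-!
Let `x = B - A` and let `u`, `v` be the unit bisector directions at `A` and `B`, so that
`A₁ - B₁ = u - v - x`. For unit vectors `e`, `f` at angle `θ` one has `‖e + f‖ = 2 cos(θ/2)`,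
which gives `⟪x, u⟫ = c cos(α/2)`, `⟪x, v⟫ = -c cos(β/2)` and, via
`1 + cos α + cos β + cos (α + β) = 4 cos(α/2) cos(β/2) cos((α+β)/2)` and `γ = π - α - β`,
`⟪u, v⟫ = -cos((α+β)/2)`. Hence `|A₁B₁|²` exceeds the claimed bound by
`2 cos((α+β)/2) - 2c cos(α/2) cos(β/2)`. The law of sines turns `c cos(α/2) cos(β/2)` into
`p sin(γ/2) = p cos((α+β)/2)`, so the excess is `2 (1 - p) cos((α+β)/2) ≥ 0`.
-/

open Real

lemma one_add_cos_add_cos_add_cos_add (a b : ℝ) :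
    1 + cos a + cos b + cos (a + b) = 4 * cos (a / 2) * cos (b / 2) * cos ((a + b) / 2) := by
  obtain ⟨s, rfl⟩ : ∃ s, a = 2 * s := ⟨a / 2, by ring⟩
  obtain ⟨t, rfl⟩ : ∃ t, b = 2 * t := ⟨b / 2, by ring⟩
  rw [show 2 * s + 2 * t = 2 * (s + t) by ring]
  simp only [mul_div_cancel_left₀ _ (two_ne_zero' ℝ), cos_two_mul, cos_add]
  linear_combination
    2 * sin t ^ 2 * sin_sq_add_cos_sq s + 2 * (1 - cos s ^ 2) * sin_sq_add_cos_sq t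

lemma sin_add_sin_add_sin_add (a b : ℝ) :
    sin a + sin b + sin (a + b) = 4 * cos (a / 2) * cos (b / 2) * sin ((a + b) / 2) := by
  obtain ⟨s, rfl⟩ : ∃ s, a = 2 * s := ⟨a / 2, by ring⟩
  obtain ⟨t, rfl⟩ : ∃ t, b = 2 * t := ⟨b / 2, by ring⟩
  rw [show 2 * s + 2 * t = 2 * (s + t) by ring]
  simp only [mul_div_cancel_left₀ _ (two_ne_zero' ℝ), sin_two_mul, cos_add, sin_add]
  linear_combination
    -2 * sin s * cos s * sin_sq_add_cos_sq t - 2 * sin t * cos t * sin_sq_add_cos_sq s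

section UnitBisector

open InnerProductGeometry NormedSpace

variable {V : Type*} [NormedAddCommGroup V] [InnerProductSpace ℝ V] {x y : V}

noncomputable def unitBisector (x y : V) : V :=
  normalize (normalize x + normalize y)

lemma inner_normalize_normalize (hx : x ≠ 0) (hy : y ≠ 0) :
    ⟪normalize x, normalize y⟫ = cos (angle x y) := by
  rw [inner_eq_cos_angle_of_norm_eq_one (norm_normalize_eq_one_iff.2 hx)
    (norm_normalize_eq_one_iff.2 hy), angle_normalize_left, angle_normalize_right]

lemma cos_eq_two_mul_cos_half_sq (θ : ℝ) : cos θ = 2 * cos (θ / 2) ^ 2 - 1 := by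
  rw [← cos_two_mul, mul_div_cancel₀ _ two_ne_zero]

lemma cos_angle_div_two_pos (h : angle x y < π) : 0 < cos (angle x y / 2) :=
  cos_pos_of_mem_Ioo ⟨by linarith [angle_nonneg x y, pi_pos], by linarith⟩

lemma norm_normalize_add_normalize (hx : x ≠ 0) (hy : y ≠ 0) :
    ‖normalize x + normalize y‖ = 2 * cos (angle x y / 2) := by
  have hcos : 0 ≤ cos (angle x y / 2) :=
    cos_nonneg_of_mem_Icc ⟨by linarith [angle_nonneg x y, pi_pos], by linarith [angle_le_pi x y]⟩
  refine (sq_eq_sq₀ (norm_nonneg _) (by positivity)).1 ?_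
  rw [norm_add_sq_real, inner_normalize_normalize hx hy, norm_normalize_eq_one_iff.2 hx,
    norm_normalize_eq_one_iff.2 hy, cos_eq_two_mul_cos_half_sq (angle x y)]
  ring

lemma norm_unitBisector (hx : x ≠ 0) (hy : y ≠ 0) (h : angle x y < π) :
    ‖unitBisector x y‖ = 1 := by
  refine norm_normalize_eq_one_iff.2 (norm_ne_zero_iff.1 ?_)
  rw [norm_normalize_add_normalize hx hy]
  exact (mul_pos two_pos (cos_angle_div_two_pos h)).ne'

lemma inner_unitBisector_left (hx : x ≠ 0) (hy : y ≠ 0) (h : angle x y < π) :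
    ⟪x, unitBisector x y⟫ = ‖x‖ * cos (angle x y / 2) := by
  have hcos := cos_angle_div_two_pos h
  show ⟪x, ‖normalize x + normalize y‖⁻¹ • (normalize x + normalize y)⟫ = _
  nth_rw 1 [← norm_smul_normalize x]
  rw [norm_normalize_add_normalize hx hy, real_inner_smul_left,
    real_inner_smul_right, inner_add_right, real_inner_self_eq_norm_sq,
    norm_normalize_eq_one_iff.2 hx, inner_normalize_normalize hx hy,
    cos_eq_two_mul_cos_half_sq (angle x y)]
  field_simp
  ring

lemma inner_unitBisector_unitBisector {x' y' : V} (hx : x ≠ 0) (hy : y ≠ 0) (hx' : x' ≠ 0)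
    (hy' : y' ≠ 0) (h : angle x y < π) (h' : angle x' y' < π) :
    ⟪unitBisector x y, unitBisector x' y'⟫ =
      (cos (angle x x') + cos (angle x y') + cos (angle y x') + cos (angle y y')) /
        (4 * cos (angle x y / 2) * cos (angle x' y' / 2)) := by
  have hcos := cos_angle_div_two_pos h
  have hcos' := cos_angle_div_two_pos h'
  show ⟪‖normalize x + normalize y‖⁻¹ • (normalize x + normalize y),
    ‖normalize x' + normalize y'‖⁻¹ • (normalize x' + normalize y')⟫ = _
  rw [real_inner_smul_left, real_inner_smul_right, norm_normalize_add_normalize hx hy,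
    norm_normalize_add_normalize hx' hy', inner_add_left, inner_add_right, inner_add_right,
    inner_normalize_normalize hx hx', inner_normalize_normalize hx hy',
    inner_normalize_normalize hy hx', inner_normalize_normalize hy hy']
  field_simp
  ring

end UnitBisector

section Triangle

open EuclideanGeometry

variable {V P : Type*} [NormedAddCommGroup V] [InnerProductSpace ℝ V] [MetricSpace P]
  [NormedAddTorsor V P] {A B C : P}

lemma angle_pos_of_affineIndependent (h : AffineIndependent ℝ ![A, B, C]) :
    0 < ∠ B A C ∧ 0 < ∠ A B C := by
  have hcol := affineIndependent_iff_not_collinear_set.1 h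
  exact ⟨angle_pos_of_not_collinear (by rwa [Set.insert_comm]), angle_pos_of_not_collinear hcol⟩

lemma angle_lt_pi_of_affineIndependent (h : AffineIndependent ℝ ![A, B, C]) :
    ∠ B A C < π ∧ ∠ A B C < π := by
  have hcol := affineIndependent_iff_not_collinear_set.1 h
  exact ⟨angle_lt_pi_of_not_collinear (by rwa [Set.insert_comm]),
    angle_lt_pi_of_not_collinear hcol⟩

lemma angle_add_angle_lt_pi_of_affineIndependent (h : AffineIndependent ℝ ![A, B, C]) :
    ∠ B A C + ∠ A B C < π := by
  have hcol := affineIndependent_iff_not_collinear_set.1 h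
  have hsum := angle_add_angle_add_angle_eq_pi C (ne₁₂_of_not_collinear hcol).symm
  have hγ : 0 < ∠ B C A :=
    angle_pos_of_not_collinear (by rwa [Set.insert_comm A B, Set.pair_comm A C] at hcol)
  rw [angle_comm C A B] at hsum
  linarith

/-- The classical identity `p sin(γ/2) = c cos(α/2) cos(β/2)`, with `sin(γ/2)` written as
`cos((α + β)/2)`. -/
lemma semiperimeter_mul_cos_half_add (h : AffineIndependent ℝ ![A, B, C]) :
    (dist B C + dist C A + dist A B) / 2 * cos ((∠ B A C + ∠ A B C) / 2) =
      dist A B * cos (∠ B A C / 2) * cos (∠ A B C / 2) := by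
  have hcol := affineIndependent_iff_not_collinear_set.1 h
  have hsum := angle_add_angle_add_angle_eq_pi C (ne₁₂_of_not_collinear hcol).symm
  rw [angle_comm C A B] at hsum
  have hγ : sin (∠ B C A) = sin (∠ B A C + ∠ A B C) := by
    rw [← sin_pi_sub]; congr 1; linarith
  have ha : sin (∠ B C A) * dist B C = sin (∠ B A C) * dist A B := by
    simpa only [angle_comm A C B, dist_comm] using law_sin A C B
  have hb : sin (∠ B C A) * dist C A = sin (∠ A B C) * dist A B := law_sin B C A
  have hsin_half : sin (∠ B A C + ∠ A B C) =
      2 * sin ((∠ B A C + ∠ A B C) / 2) * cos ((∠ B A C + ∠ A B C) / 2) := by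
    rw [← sin_two_mul, mul_div_cancel₀ _ two_ne_zero]
  have hpos : 0 < sin ((∠ B A C + ∠ A B C) / 2) := by
    obtain ⟨hα, hβ⟩ := angle_pos_of_affineIndependent h
    have hlt := angle_add_angle_lt_pi_of_affineIndependent h
    exact sin_pos_of_pos_of_lt_pi (by linarith) (by linarith)
  rw [hγ] at ha hb
  refine mul_left_cancel₀ hpos.ne' ?_
  linear_combination (ha + hb) / 4 - (dist B C + dist C A + dist A B) / 4 * hsin_half +
    dist A B / 4 * sin_add_sin_add_sin_add (∠ B A C) (∠ A B C)

end Triangle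

section BisectorPoints

open EuclideanGeometry

variable {V : Type*} [NormedAddCommGroup V] [InnerProductSpace ℝ V] {A B C : V}

lemma unitBisector_sub_sub (A B C : V) :
    unitBisector (B - A) (C - A) = ‖(dist A B)⁻¹ • (B - A) + (dist A C)⁻¹ • (C - A)‖⁻¹ •
      ((dist A B)⁻¹ • (B - A) + (dist A C)⁻¹ • (C - A)) := by
  simp only [unitBisector, NormedSpace.normalize, dist_eq_norm']

-- The bisectors from `A` and `B` meet at the incenter `I`, and `∠ A I B = π - (α + β) / 2`.
lemma inner_unitBisector_unitBisector_of_affineIndependent (h : AffineIndependent ℝ ![A, B, C]) :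
    ⟪unitBisector (B - A) (C - A), unitBisector (A - B) (C - B)⟫ =
      -cos ((∠ B A C + ∠ A B C) / 2) := by
  have hcol := affineIndependent_iff_not_collinear_set.1 h
  have hAB : B - A ≠ 0 := sub_ne_zero.2 (ne₁₂_of_not_collinear hcol).symm
  have hBA : A - B ≠ 0 := sub_ne_zero.2 (ne₁₂_of_not_collinear hcol)
  have hAC : C - A ≠ 0 := sub_ne_zero.2 (ne₁₃_of_not_collinear hcol).symm
  have hBC : C - B ≠ 0 := sub_ne_zero.2 (ne₂₃_of_not_collinear hcol).symm
  obtain ⟨hα, hβ⟩ := angle_lt_pi_of_affineIndependent h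
  have hsum := angle_add_angle_add_angle_eq_pi C (ne₁₂_of_not_collinear hcol).symm
  rw [angle_comm C A B] at hsum
  have h₁ : InnerProductGeometry.angle (B - A) (A - B) = π := by
    rw [← neg_sub B A]; exact InnerProductGeometry.angle_self_neg_of_nonzero hAB
  have h₂ : InnerProductGeometry.angle (B - A) (C - B) = π - ∠ A B C := by
    rw [← neg_sub A B, InnerProductGeometry.angle_neg_left]; rfl
  have h₃ : InnerProductGeometry.angle (C - A) (A - B) = π - ∠ B A C := by
    rw [← neg_sub B A, InnerProductGeometry.angle_neg_right, InnerProductGeometry.angle_comm]; rfl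
  have h₄ : InnerProductGeometry.angle (C - A) (C - B) = π - (∠ B A C + ∠ A B C) := by
    rw [← InnerProductGeometry.angle_neg_neg, neg_sub, neg_sub, InnerProductGeometry.angle_comm]
    change ∠ B C A = _
    linarith
  have hcα : 0 < cos (∠ B A C / 2) := cos_angle_div_two_pos hα
  have hcβ : 0 < cos (∠ A B C / 2) := cos_angle_div_two_pos hβ
  rw [inner_unitBisector_unitBisector hAB hAC hBA hBC hα hβ, h₁, h₂, h₃, h₄, cos_pi, cos_pi_sub, cos_pi_sub, cos_pi_sub]
  change _ / (4 * cos (∠ B A C / 2) * cos (∠ A B C / 2)) = _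
  field_simp
  linear_combination -one_add_cos_add_cos_add_cos_add (∠ B A C) (∠ A B C)

lemma dist_add_unitBisector_sq (h : AffineIndependent ℝ ![A, B, C]) :
    dist (A + unitBisector (B - A) (C - A)) (B + unitBisector (A - B) (C - B)) ^ 2 =
      dist A B ^ 2 + 2 - 2 * dist A B * (cos (∠ B A C / 2) + cos (∠ A B C / 2)) +
        2 * cos ((∠ B A C + ∠ A B C) / 2) := by
  have hcol := affineIndependent_iff_not_collinear_set.1 h
  have hAB : B - A ≠ 0 := sub_ne_zero.2 (ne₁₂_of_not_collinear hcol).symm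
  have hBA : A - B ≠ 0 := sub_ne_zero.2 (ne₁₂_of_not_collinear hcol)
  have hAC : C - A ≠ 0 := sub_ne_zero.2 (ne₁₃_of_not_collinear hcol).symm
  have hBC : C - B ≠ 0 := sub_ne_zero.2 (ne₂₃_of_not_collinear hcol).symm
  obtain ⟨hα, hβ⟩ := angle_lt_pi_of_affineIndependent h
  have hu : ⟪unitBisector (B - A) (C - A), A - B⟫ = -(dist A B * cos (∠ B A C / 2)) := by
    rw [← neg_sub B A, inner_neg_right, real_inner_comm, inner_unitBisector_left hAB hAC hα,
      dist_eq_norm']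
    rfl
  have hv : ⟪unitBisector (A - B) (C - B), A - B⟫ = dist A B * cos (∠ A B C / 2) := by
    rw [real_inner_comm, inner_unitBisector_left hBA hBC hβ, dist_eq_norm]
    rfl
  rw [dist_eq_norm, show A + unitBisector (B - A) (C - A) - (B + unitBisector (A - B) (C - B)) =
    unitBisector (B - A) (C - A) - unitBisector (A - B) (C - B) + (A - B) by abel,
    norm_add_sq_real, norm_sub_sq_real, inner_sub_left, norm_unitBisector hAB hAC hα,
    norm_unitBisector hBA hBC hβ, inner_unitBisector_unitBisector_of_affineIndependent h, hu, hv,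
    ← dist_eq_norm]
  ring

end BisectorPoints

open EuclideanGeometry in
/-- For a triangle with semiperimeter `p ≤ 1`, the points `A₁, B₁` at distance 1 along
the interior bisectors from `A` and `B` satisfy
`|A₁B₁|² ≥ 1 + (1−c)² + 2c(1 − cos(α/2))(1 − cos(β/2)) > 1`. -/
theorem bisector_points_far (A B C A₁ B₁ : EuclideanSpace ℝ (Fin 2))
    (hnd : AffineIndependent ℝ ![A, B, C])
    (α β c p : ℝ)
    (hα : α = ∠ B A C) (hβ : β = ∠ A B C) (hc : c = dist A B)
    (hp : p = (dist B C + dist C A + dist A B) / 2) (hp1 : p ≤ 1)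
    (hA₁ : A₁ = A + ‖(dist A B)⁻¹ • (B - A) + (dist A C)⁻¹ • (C - A)‖⁻¹ •
      ((dist A B)⁻¹ • (B - A) + (dist A C)⁻¹ • (C - A)))
    (hB₁ : B₁ = B + ‖(dist B A)⁻¹ • (A - B) + (dist B C)⁻¹ • (C - B)‖⁻¹ •
      ((dist B A)⁻¹ • (A - B) + (dist B C)⁻¹ • (C - B))) :
    1 + (1 - c) ^ 2 + 2 * c * (1 - Real.cos (α / 2)) * (1 - Real.cos (β / 2)) ≤
      dist A₁ B₁ ^ 2 ∧
    1 < dist A₁ B₁ ^ 2 := by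
  rw [← unitBisector_sub_sub] at hA₁ hB₁
  have hdist := dist_add_unitBisector_sq hnd
  have hkey := semiperimeter_mul_cos_half_add hnd
  rw [← hA₁, ← hB₁, ← hα, ← hβ, ← hc] at hdist
  rw [← hp, ← hα, ← hβ, ← hc] at hkey
  obtain ⟨hα0, hβ0⟩ : 0 < α ∧ 0 < β := by
    rw [hα, hβ]; exact angle_pos_of_affineIndependent hnd
  have hαβ : α + β < π := by rw [hα, hβ]; exact angle_add_angle_lt_pi_of_affineIndependent hnd
  have hc0 : 0 < c := by
    rw [hc]
    exact dist_pos.2 (ne₁₂_of_not_collinear (affineIndependent_iff_not_collinear_set.1 hnd))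
  have hcos_half_add : 0 < cos ((α + β) / 2) :=
    cos_pos_of_mem_Ioo ⟨by linarith [pi_pos], by linarith⟩
  have hcα : cos (α / 2) < 1 := by
    simpa using cos_lt_cos_of_nonneg_of_le_pi le_rfl (by linarith) (half_pos hα0)
  have hcβ : cos (β / 2) < 1 := by
    simpa using cos_lt_cos_of_nonneg_of_le_pi le_rfl (by linarith) (half_pos hβ0)
  have hmain : 1 + (1 - c) ^ 2 + 2 * c * (1 - cos (α / 2)) * (1 - cos (β / 2)) ≤
      dist A₁ B₁ ^ 2 := by
    linarith [mul_nonneg (sub_nonneg.2 hp1) hcos_half_add.le]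
  refine ⟨hmain, lt_of_lt_of_le ?_ hmain⟩
  linarith [sq_nonneg (1 - c), mul_pos (mul_pos hc0 (sub_pos.2 hcα)) (sub_pos.2 hcβ)]
end
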